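/- arXiv:1509.07007 — 4 statements merged into one kernel-verified Lean document; each statement's English description precedes it below -/
import Mathlib

section
/- Let 0 < ε < 1, r ≥ 2, μ := ε²/(10r²), U := ⌈1/μ⌉, and let H = (A, B, E) be an r-uniform bipartite hypergraph satisfying τ(E_S) > (2r − 3 + ε)(|S| − 1) for every S ⊆ A. Let M be a partial matching in H and T = (L_0, …, L_ℓ) an alternating tree with respect to M, with layers L_i = (X_i, Y_i), such that every edge of X_{≤ℓ} has at least one blocking edge with respect to M and 1 + |Y_1 ∪ … ∪ Y_ℓ| < ⌈5r²/ε⌉. Then there exist a vertex ā ∈ A(Y_{≤ℓ}) contained in fewer than U edges of X_{≤ℓ} and an edge e ∈ E with ā ∈ e such that e ∩ B is disjoint from B(X_{≤ℓ} ∪ Y_{≤ℓ}). -/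
open Finset

variable {V : Type*} [DecidableEq V]

/-- The `A`-vertices covered by a set of edges: `A(F) = ⋃ e ∈ F, e ∩ A`. -/
def AVerts (A : Finset V) (F : Finset (Finset V)) : Finset V :=
  F.biUnion fun e => e ∩ A

/-- The `B`-vertices covered by a set of edges: `B(F) = ⋃ e ∈ F, e ∩ B`. -/
def BVerts (B : Finset V) (F : Finset (Finset V)) : Finset V :=
  F.biUnion fun e => e ∩ B

/-- `H = (A, B, E)` is an `r`-uniform bipartite hypergraph: `A` and `B` are disjoint,
and every edge `e ∈ E` satisfies `e ⊆ A ∪ B`, `|e ∩ A| = 1` and `|e ∩ B| = r - 1`. -/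
def IsBipHypergraph (r : ℕ) (A B : Finset V) (E : Finset (Finset V)) : Prop :=
  Disjoint A B ∧ ∀ e ∈ E, e ⊆ A ∪ B ∧ (e ∩ A).card = 1 ∧ (e ∩ B).card = r - 1

/-- A partial matching: a set of pairwise disjoint edges of `E`. -/
def IsPartialMatching (E M : Finset (Finset V)) : Prop :=
  M ⊆ E ∧ ∀ e ∈ M, ∀ f ∈ M, e ≠ f → Disjoint e f

/-- A perfect matching: a partial matching covering every vertex of `A`. -/
def IsPerfectMatching (A : Finset V) (E M : Finset (Finset V)) : Prop :=
  IsPartialMatching E M ∧ ∀ a ∈ A, ∃ e ∈ M, a ∈ e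

/-- `E_S`: the edges of `E` meeting `S` in exactly one vertex. -/
def edgesOn (E : Finset (Finset V)) (S : Finset V) : Finset (Finset V) :=
  E.filter fun e => (e ∩ S).card = 1

/-- `τ(F)`: the minimum cardinality of a subset of `B` intersecting every edge of `F`. -/
noncomputable def tau (B : Finset V) (F : Finset (Finset V)) : ℕ :=
  sInf {n : ℕ | ∃ T ⊆ B, T.card = n ∧ ∀ e ∈ F, (e ∩ T).Nonempty}

/-- `e` is immediately addable w.r.t. the matching `M`: it has no blocking edges. -/
def ImmAddable (B : Finset V) (M : Finset (Finset V)) (e : Finset V) : Prop :=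
  ∀ f ∈ M, f ∩ e ∩ B = ∅

/-- A layer `(X, Y)` w.r.t. the matching `M`. -/
def IsLayer (B : Finset V) (E M X Y : Finset (Finset V)) : Prop :=
  X ⊆ E \ M ∧
  (∀ e ∈ X, ∀ f ∈ X, e ≠ f → e ∩ f ∩ B = ∅) ∧
  (∀ f, f ∈ Y ↔ f ∈ M ∧ ∃ e ∈ X, (f ∩ e ∩ B).Nonempty) ∧
  (∀ f ∈ Y, ∃! e, e ∈ X ∧ (f ∩ e ∩ B).Nonempty)

/-- An alternating tree `T = (L_0, …, L_ℓ)` w.r.t. `M`, rooted at the unmatched vertex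
`a0 ∈ A`. Layer `0` is `(∅, {{a0}})`, so that `A(Y_0) = {a0}` and `B(Y_0) = ∅`. -/
def IsAltTree (A B : Finset V) (E M : Finset (Finset V)) (a0 : V)
    (ℓ : ℕ) (X Y : ℕ → Finset (Finset V)) : Prop :=
  a0 ∈ A ∧ (∀ e ∈ M, a0 ∉ e) ∧
  X 0 = ∅ ∧ Y 0 = {{a0}} ∧
  (∀ i, 1 ≤ i → i ≤ ℓ → IsLayer B E M (X i) (Y i)) ∧
  (∀ i, 1 ≤ i → i ≤ ℓ → AVerts A (X i) ⊆ AVerts A (Y (i - 1))) ∧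
  (∀ i j, i ≤ ℓ → j ≤ ℓ → i ≠ j →
    Disjoint (BVerts B (X i ∪ Y i)) (BVerts B (X j ∪ Y j)))

/-- `F_{≤t} = F_0 ∪ … ∪ F_t`. -/
def upTo (F : ℕ → Finset (Finset V)) (t : ℕ) : Finset (Finset V) :=
  (Finset.range (t + 1)).biUnion F

/-- `F_a ∪ … ∪ F_b`. -/
def unionIcc (F : ℕ → Finset (Finset V)) (a b : ℕ) : Finset (Finset V) :=
  (Finset.Icc a b).biUnion F

set_option maxHeartbeats 1600000 in
/-- If every edge of `X_{≤ℓ}` is blocked and `1 + |Y_1 ∪ … ∪ Y_ℓ| < ⌈5r²/ε⌉`, then some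
vertex `ā ∈ A(Y_{≤ℓ})` lying in fewer than `U = ⌈1/μ⌉` edges of `X_{≤ℓ}` (where
`μ = ε²/(10r²)`) has an edge `e ∋ ā` whose `B`-part avoids `B(X_{≤ℓ} ∪ Y_{≤ℓ})`. -/
theorem addable_edge_exists_small_tree {V : Type*} [DecidableEq V]
    (ε : ℝ) (hε0 : 0 < ε) (hε1 : ε < 1) (r : ℕ) (hr : 2 ≤ r)
    (A B : Finset V) (E : Finset (Finset V))
    (hH : IsBipHypergraph r A B E)
    (hHax : ∀ S ⊆ A,
      (2 * (r : ℝ) - 3 + ε) * ((S.card : ℝ) - 1) < (tau B (edgesOn E S) : ℝ))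
    (M : Finset (Finset V)) (hM : IsPartialMatching E M)
    (a0 : V) (ℓ : ℕ) (X Y : ℕ → Finset (Finset V))
    (hT : IsAltTree A B E M a0 ℓ X Y)
    (hblock : ∀ e ∈ upTo X ℓ, ∃ f ∈ M, (f ∩ e ∩ B).Nonempty)
    (hsmall : 1 + (unionIcc Y 1 ℓ).card < ⌈(5 * (r : ℝ) ^ 2) / ε⌉₊) :
    ∃ a ∈ AVerts A (upTo Y ℓ),
      ((upTo X ℓ).filter fun e => a ∈ e).card < ⌈1 / (ε ^ 2 / (10 * (r : ℝ) ^ 2))⌉₊ ∧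
      ∃ e ∈ E, a ∈ e ∧ Disjoint (e ∩ B) (BVerts B (upTo X ℓ ∪ upTo Y ℓ)) := by
  classical
  obtain ⟨hAB, hEdge⟩ := hH
  obtain ⟨hME, hMdisj⟩ := hM
  obtain ⟨ha0A, ha0M, hX0, hY0, hlayer, hAsub, hdisj⟩ := hT
  by_contra hcon
  push_neg at hcon
  -- basic membership facts
  have hXmem : ∀ e ∈ upTo X ℓ, ∃ i, 1 ≤ i ∧ i ≤ ℓ ∧ e ∈ X i := by
    intro e he
    rw [upTo, Finset.mem_biUnion] at he
    obtain ⟨i, hi, hei⟩ := he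
    rw [Finset.mem_range] at hi
    rcases Nat.eq_zero_or_pos i with h0 | h1
    · rw [h0, hX0] at hei; exact absurd hei (Finset.notMem_empty e)
    · exact ⟨i, h1, by omega, hei⟩
  have hYmem : ∀ f ∈ unionIcc Y 1 ℓ, ∃ i, 1 ≤ i ∧ i ≤ ℓ ∧ f ∈ Y i := by
    intro f hf
    rw [unionIcc, Finset.mem_biUnion] at hf
    obtain ⟨i, hi, hfi⟩ := hf
    rw [Finset.mem_Icc] at hi
    exact ⟨i, hi.1, hi.2, hfi⟩
  have hYM : ∀ f ∈ unionIcc Y 1 ℓ, f ∈ M := by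
    intro f hf
    obtain ⟨i, h1, h2, hfi⟩ := hYmem f hf
    exact (((hlayer i h1 h2).2.2.1 f).1 hfi).1
  have hXE : ∀ e ∈ upTo X ℓ, e ∈ E := by
    intro e he
    obtain ⟨i, h1, h2, hei⟩ := hXmem e he
    exact (Finset.mem_sdiff.1 ((hlayer i h1 h2).1 hei)).1
  have hBcard : ∀ e ∈ E, (e ∩ B).card = r - 1 := fun e he => (hEdge e he).2.2
  have hAcard : ∀ e ∈ E, (e ∩ A).card = 1 := fun e he => (hEdge e he).2.1
  have hBne : ∀ e ∈ E, (e ∩ B).Nonempty := by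
    intro e he
    rw [← Finset.card_pos, hBcard e he]
    omega
  have hBsub : ∀ i f, f ∈ X i ∪ Y i → f ∩ B ⊆ BVerts B (X i ∪ Y i) := by
    intro i f hf v hv
    exact Finset.mem_biUnion.2 ⟨f, hf, hv⟩
  have huniq : ∀ i j f, i ≤ ℓ → j ≤ ℓ → f ∈ E → f ∈ X i ∪ Y i → f ∈ X j ∪ Y j → i = j := by
    intro i j f hi hj hfE hfi hfj
    by_contra hne
    obtain ⟨v, hv⟩ := hBne f hfE
    exact Finset.disjoint_left.1 (hdisj i j hi hj hne) (hBsub i f hfi hv) (hBsub j f hfj hv)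
  -- an injection from X_{≤ℓ} into Y_1 ∪ … ∪ Y_ℓ
  have hkey : ∀ e, ∃ f, e ∈ upTo X ℓ → f ∈ unionIcc Y 1 ℓ ∧ (f ∩ e ∩ B).Nonempty := by
    intro e
    by_cases he : e ∈ upTo X ℓ
    · obtain ⟨i, h1, h2, hei⟩ := hXmem e he
      obtain ⟨f, hfM, hfe⟩ := hblock e he
      have hfY : f ∈ Y i := ((hlayer i h1 h2).2.2.1 f).2 ⟨hfM, e, hei, hfe⟩
      exact ⟨f, fun _ => ⟨Finset.mem_biUnion.2 ⟨i, Finset.mem_Icc.2 ⟨h1, h2⟩, hfY⟩, hfe⟩⟩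
    · exact ⟨∅, fun h => absurd h he⟩
  choose φ hφ using hkey
  have hXcard : (upTo X ℓ).card ≤ (unionIcc Y 1 ℓ).card := by
    apply Finset.card_le_card_of_injOn φ
    · intro e he; exact (hφ e he).1
    · intro e he e' he' heq
      rw [Finset.mem_coe] at he he'
      obtain ⟨hfY1, hfe⟩ := hφ e he
      obtain ⟨hf'Y1, hfe'⟩ := hφ e' he'
      rw [← heq] at hfe' hf'Y1
      obtain ⟨i, hi1, hi2, hei⟩ := hXmem e he
      obtain ⟨j, hj1, hj2, hej⟩ := hXmem e' he'
      have hfM : φ e ∈ M := hYM _ hfY1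
      have hfE : φ e ∈ E := hME hfM
      have hfYi : φ e ∈ Y i := ((hlayer i hi1 hi2).2.2.1 _).2 ⟨hfM, e, hei, hfe⟩
      have hfYj : φ e ∈ Y j := ((hlayer j hj1 hj2).2.2.1 _).2 ⟨hfM, e', hej, hfe'⟩
      have hij : i = j := huniq i j (φ e) hi2 hj2 hfE
        (Finset.mem_union_right _ hfYi) (Finset.mem_union_right _ hfYj)
      subst hij
      obtain ⟨z, hz, hzu⟩ := (hlayer i hi1 hi2).2.2.2 (φ e) hfYi
      rw [hzu e ⟨hei, hfe⟩, hzu e' ⟨hej, hfe'⟩]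
  -- structure of Y_{≤ℓ}
  have hYUeq : upTo Y ℓ = insert {a0} (unionIcc Y 1 ℓ) := by
    ext f
    simp only [upTo, unionIcc, Finset.mem_biUnion, Finset.mem_range, Finset.mem_Icc,
      Finset.mem_insert]
    constructor
    · rintro ⟨i, hi, hfi⟩
      rcases Nat.eq_zero_or_pos i with h0 | h1
      · left; rw [h0, hY0] at hfi; exact Finset.mem_singleton.1 hfi
      · right; exact ⟨i, ⟨h1, by omega⟩, hfi⟩
    · rintro (rfl | ⟨i, ⟨h1, h2⟩, hfi⟩)
      · exact ⟨0, by omega, by rw [hY0]; exact Finset.mem_singleton_self _⟩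
      · exact ⟨i, by omega, hfi⟩
  have ha0nY1 : a0 ∉ AVerts A (unionIcc Y 1 ℓ) := by
    intro ha
    rw [AVerts, Finset.mem_biUnion] at ha
    obtain ⟨f, hf, haf⟩ := ha
    exact ha0M f (hYM f hf) (Finset.mem_inter.1 haf).1
  have hSAeq : AVerts A (upTo Y ℓ) = insert a0 (AVerts A (unionIcc Y 1 ℓ)) := by
    rw [hYUeq]
    simp only [AVerts]
    rw [Finset.biUnion_insert, Finset.singleton_inter_of_mem ha0A, Finset.insert_eq]
  have hY1A : (AVerts A (unionIcc Y 1 ℓ)).card = (unionIcc Y 1 ℓ).card := by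
    rw [AVerts, Finset.card_biUnion]
    · rw [Finset.sum_congr rfl (fun f hf => hAcard f (hME (hYM f hf)))]
      simp
    · intro f hf g hg hfg
      exact (hMdisj f (hYM f hf) g (hYM g hg) hfg).mono Finset.inter_subset_left
        Finset.inter_subset_left
  have hSAcard : (AVerts A (upTo Y ℓ)).card = 1 + (unionIcc Y 1 ℓ).card := by
    rw [hSAeq, Finset.card_insert_of_notMem ha0nY1, hY1A]
    omega
  have hSAsubA : AVerts A (upTo Y ℓ) ⊆ A := by
    intro a ha
    rw [AVerts, Finset.mem_biUnion] at ha
    obtain ⟨f, _, haf⟩ := ha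
    exact (Finset.mem_inter.1 haf).2
  -- degree double counting
  have hdegsum : ∑ a ∈ AVerts A (upTo Y ℓ), ((upTo X ℓ).filter fun e => a ∈ e).card
      ≤ (upTo X ℓ).card := by
    calc ∑ a ∈ AVerts A (upTo Y ℓ), ((upTo X ℓ).filter fun e => a ∈ e).card
        = ∑ a ∈ AVerts A (upTo Y ℓ), ∑ e ∈ upTo X ℓ, if a ∈ e then 1 else 0 := by
          refine Finset.sum_congr rfl fun a _ => ?_
          rw [Finset.card_filter]
      _ = ∑ e ∈ upTo X ℓ, ∑ a ∈ AVerts A (upTo Y ℓ), if a ∈ e then 1 else 0 :=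
          Finset.sum_comm
      _ = ∑ e ∈ upTo X ℓ, ((AVerts A (upTo Y ℓ)).filter fun a => a ∈ e).card := by
          refine Finset.sum_congr rfl fun e _ => ?_
          rw [Finset.card_filter]
      _ ≤ ∑ e ∈ upTo X ℓ, 1 := by
          refine Finset.sum_le_sum fun e he => ?_
          calc ((AVerts A (upTo Y ℓ)).filter fun a => a ∈ e).card
              ≤ (e ∩ A).card := Finset.card_le_card (by
                intro a ha
                rw [Finset.mem_filter] at ha
                exact Finset.mem_inter.2 ⟨ha.2, hSAsubA ha.1⟩)
            _ = 1 := hAcard e (hXE e he)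
      _ = (upTo X ℓ).card := by simp
  -- split into low and high degree vertices
  set U := ⌈1 / (ε ^ 2 / (10 * (r : ℝ) ^ 2))⌉₊ with hUdef
  set Slo := (AVerts A (upTo Y ℓ)).filter
    (fun a => ((upTo X ℓ).filter fun e => a ∈ e).card < U) with hSlodef
  set Shi := (AVerts A (upTo Y ℓ)).filter
    (fun a => ¬ ((upTo X ℓ).filter fun e => a ∈ e).card < U) with hShidef
  have hsplit : Slo.card + Shi.card = (AVerts A (upTo Y ℓ)).card :=
    Finset.card_filter_add_card_filter_not _
  have hhi : U * Shi.card ≤ (unionIcc Y 1 ℓ).card := by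
    have h1 : Shi.card • U ≤ ∑ a ∈ Shi, ((upTo X ℓ).filter fun e => a ∈ e).card :=
      Finset.card_nsmul_le_sum _ _ _ (fun a ha => Nat.not_lt.1 (Finset.mem_filter.1 ha).2)
    have h2 : ∑ a ∈ Shi, ((upTo X ℓ).filter fun e => a ∈ e).card
        ≤ ∑ a ∈ AVerts A (upTo Y ℓ), ((upTo X ℓ).filter fun e => a ∈ e).card :=
      Finset.sum_le_sum_of_subset (Finset.filter_subset _ _)
    have := le_trans h1 (le_trans h2 (le_trans hdegsum hXcard))
    rw [smul_eq_mul, Nat.mul_comm] at this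
    exact this
  -- W covers the edges on Slo
  have hWB : BVerts B (upTo X ℓ ∪ upTo Y ℓ) ⊆ B := by
    intro v hv
    rw [BVerts, Finset.mem_biUnion] at hv
    obtain ⟨f, _, hvf⟩ := hv
    exact (Finset.mem_inter.1 hvf).2
  have hcover : ∀ e ∈ edgesOn E Slo, (e ∩ BVerts B (upTo X ℓ ∪ upTo Y ℓ)).Nonempty := by
    intro e he
    rw [edgesOn, Finset.mem_filter] at he
    obtain ⟨heE, hcard⟩ := he
    obtain ⟨a, ha⟩ := Finset.card_eq_one.1 hcard
    have ha' : a ∈ e ∩ Slo := ha ▸ Finset.mem_singleton_self a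
    rw [Finset.mem_inter] at ha'
    have haS := Finset.mem_filter.1 ha'.2
    have hnd := hcon a haS.1 haS.2 e heE ha'.1
    obtain ⟨v, hv1, hv2⟩ := Finset.not_disjoint_iff.1 hnd
    exact ⟨v, Finset.mem_inter.2 ⟨(Finset.mem_inter.1 hv1).1, hv2⟩⟩
  have htau : tau B (edgesOn E Slo) ≤ (BVerts B (upTo X ℓ ∪ upTo Y ℓ)).card :=
    Nat.sInf_le ⟨_, hWB, rfl, hcover⟩
  -- bound on |W|
  have hWcard : (BVerts B (upTo X ℓ ∪ upTo Y ℓ)).card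
      ≤ (2 * r - 3) * (unionIcc Y 1 ℓ).card := by
    have hsplitW : BVerts B (upTo X ℓ ∪ upTo Y ℓ)
        ⊆ BVerts B (upTo X ℓ) ∪ (BVerts B (upTo Y ℓ) \ BVerts B (upTo X ℓ)) := by
      intro v hv
      rw [BVerts, Finset.mem_biUnion] at hv
      obtain ⟨f, hf, hvf⟩ := hv
      rw [Finset.mem_union] at hf
      by_cases hvX : v ∈ BVerts B (upTo X ℓ)
      · exact Finset.mem_union_left _ hvX
      · rcases hf with hf | hf
        · exact absurd (Finset.mem_biUnion.2 ⟨f, hf, hvf⟩) hvX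
        · exact Finset.mem_union_right _
            (Finset.mem_sdiff.2 ⟨Finset.mem_biUnion.2 ⟨f, hf, hvf⟩, hvX⟩)
    have hX' : (BVerts B (upTo X ℓ)).card ≤ (upTo X ℓ).card * (r - 1) := by
      calc (BVerts B (upTo X ℓ)).card ≤ ∑ e ∈ upTo X ℓ, (e ∩ B).card :=
            Finset.card_biUnion_le
        _ = ∑ e ∈ upTo X ℓ, (r - 1) :=
            Finset.sum_congr rfl fun e he => hBcard e (hXE e he)
        _ = (upTo X ℓ).card * (r - 1) := by rw [Finset.sum_const, smul_eq_mul]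
    have hY' : (BVerts B (upTo Y ℓ) \ BVerts B (upTo X ℓ)).card
        ≤ (unionIcc Y 1 ℓ).card * (r - 2) := by
      have hsub : BVerts B (upTo Y ℓ) \ BVerts B (upTo X ℓ)
          ⊆ (unionIcc Y 1 ℓ).biUnion (fun f => (f ∩ B) \ BVerts B (upTo X ℓ)) := by
        intro v hv
        rw [Finset.mem_sdiff] at hv
        obtain ⟨hv1, hv2⟩ := hv
        rw [BVerts, Finset.mem_biUnion] at hv1
        obtain ⟨f, hf, hvf⟩ := hv1
        rw [hYUeq, Finset.mem_insert] at hf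
        rcases hf with rfl | hf
        · rw [Finset.mem_inter, Finset.mem_singleton] at hvf
          exact absurd (hvf.1 ▸ hvf.2) (Finset.disjoint_left.1 hAB ha0A)
        · exact Finset.mem_biUnion.2 ⟨f, hf, Finset.mem_sdiff.2 ⟨hvf, hv2⟩⟩
      refine le_trans (Finset.card_le_card hsub) (le_trans Finset.card_biUnion_le ?_)
      have hper : ∀ f ∈ unionIcc Y 1 ℓ, ((f ∩ B) \ BVerts B (upTo X ℓ)).card ≤ r - 2 := by
        intro f hf
        have hfM := hYM f hf
        have hfE := hME hfM
        obtain ⟨i, h1, h2, hfY⟩ := hYmem f hf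
        obtain ⟨e, ⟨hei, hfeB⟩, _⟩ := (hlayer i h1 h2).2.2.2 f hfY
        obtain ⟨v0, hv0⟩ := hfeB
        rw [Finset.mem_inter] at hv0
        have hv0fe := Finset.mem_inter.1 hv0.1
        have heXU : e ∈ upTo X ℓ :=
          Finset.mem_biUnion.2 ⟨i, Finset.mem_range.2 (by omega), hei⟩
        have hv0f : v0 ∈ f ∩ B := Finset.mem_inter.2 ⟨hv0fe.1, hv0.2⟩
        have hv0X : v0 ∈ BVerts B (upTo X ℓ) :=
          Finset.mem_biUnion.2 ⟨e, heXU, Finset.mem_inter.2 ⟨hv0fe.2, hv0.2⟩⟩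
        have hss : (f ∩ B) \ BVerts B (upTo X ℓ) ⊆ (f ∩ B).erase v0 := by
          intro v hv
          rw [Finset.mem_sdiff] at hv
          rw [Finset.mem_erase]
          exact ⟨fun h => hv.2 (h ▸ hv0X), hv.1⟩
        calc ((f ∩ B) \ BVerts B (upTo X ℓ)).card ≤ ((f ∩ B).erase v0).card :=
              Finset.card_le_card hss
          _ = (f ∩ B).card - 1 := Finset.card_erase_of_mem hv0f
          _ ≤ r - 2 := by rw [hBcard f hfE]; omega
      calc ∑ f ∈ unionIcc Y 1 ℓ, ((f ∩ B) \ BVerts B (upTo X ℓ)).card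
          ≤ ∑ _f ∈ unionIcc Y 1 ℓ, (r - 2) := Finset.sum_le_sum hper
        _ = (unionIcc Y 1 ℓ).card * (r - 2) := by rw [Finset.sum_const, smul_eq_mul]
    calc (BVerts B (upTo X ℓ ∪ upTo Y ℓ)).card
        ≤ (BVerts B (upTo X ℓ) ∪ (BVerts B (upTo Y ℓ) \ BVerts B (upTo X ℓ))).card :=
          Finset.card_le_card hsplitW
      _ ≤ (BVerts B (upTo X ℓ)).card
          + (BVerts B (upTo Y ℓ) \ BVerts B (upTo X ℓ)).card := Finset.card_union_le _ _
      _ ≤ (upTo X ℓ).card * (r - 1) + (unionIcc Y 1 ℓ).card * (r - 2) :=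
          Nat.add_le_add hX' hY'
      _ ≤ (unionIcc Y 1 ℓ).card * (r - 1) + (unionIcc Y 1 ℓ).card * (r - 2) :=
          Nat.add_le_add_right (Nat.mul_le_mul_right _ hXcard) _
      _ = (unionIcc Y 1 ℓ).card * ((r - 1) + (r - 2)) := by rw [Nat.mul_add]
      _ = (2 * r - 3) * (unionIcc Y 1 ℓ).card := by
          rw [Nat.mul_comm]
          congr 1
          omega
  -- final numeric contradiction
  have hSloA : Slo ⊆ A := fun a ha => hSAsubA (Finset.mem_filter.1 ha).1
  have hmain := hHax Slo hSloA
  have hWR : ((BVerts B (upTo X ℓ ∪ upTo Y ℓ)).card : ℝ)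
      ≤ (2 * (r : ℝ) - 3) * ((unionIcc Y 1 ℓ).card : ℝ) := by
    calc ((BVerts B (upTo X ℓ ∪ upTo Y ℓ)).card : ℝ)
        ≤ (((2 * r - 3) * (unionIcc Y 1 ℓ).card : ℕ) : ℝ) := Nat.cast_le.2 hWcard
      _ = (2 * (r : ℝ) - 3) * ((unionIcc Y 1 ℓ).card : ℝ) := by
          rw [Nat.cast_mul, Nat.cast_sub (by omega : 3 ≤ 2 * r)]
          push_cast
          ring
  have hrR : (2 : ℝ) ≤ (r : ℝ) := by exact_mod_cast hr
  have hSloCard : (Slo.card : ℝ) = 1 + ((unionIcc Y 1 ℓ).card : ℝ) - (Shi.card : ℝ) := by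
    have h := hsplit
    rw [hSAcard] at h
    have : (Slo.card : ℝ) + (Shi.card : ℝ) = 1 + ((unionIcc Y 1 ℓ).card : ℝ) := by
      exact_mod_cast h
    linarith
  have hUb : (10 * (r : ℝ) ^ 2) / ε ^ 2 ≤ (U : ℝ) := by
    rw [hUdef]
    have heq : (10 * (r : ℝ) ^ 2) / ε ^ 2 = 1 / (ε ^ 2 / (10 * (r : ℝ) ^ 2)) :=
      (one_div_div _ _).symm
    rw [heq]
    exact Nat.le_ceil _
  have hhiR : (U : ℝ) * (Shi.card : ℝ) ≤ ((unionIcc Y 1 ℓ).card : ℝ) := by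
    exact_mod_cast hhi
  have h1 : (2 * (r : ℝ) - 3 + ε) * ((Slo.card : ℝ) - 1)
      < (2 * (r : ℝ) - 3) * ((unionIcc Y 1 ℓ).card : ℝ) :=
    lt_of_lt_of_le hmain (le_trans (Nat.cast_le.2 htau) hWR)
  set mR := ((unionIcc Y 1 ℓ).card : ℝ) with hmRdef
  set hR := (Shi.card : ℝ) with hhRdef
  have hhR0 : (0 : ℝ) ≤ hR := Nat.cast_nonneg _
  have hmR0 : (0 : ℝ) ≤ mR := Nat.cast_nonneg _
  rw [hSloCard] at h1
  have hrsq : (0 : ℝ) < (r : ℝ) ^ 2 := by positivity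
  have hεsq : (0 : ℝ) < ε ^ 2 := by positivity
  have hUhR : (10 * (r : ℝ) ^ 2) / ε ^ 2 * hR ≤ mR :=
    le_trans (mul_le_mul_of_nonneg_right hUb hhR0) hhiR
  have hUhR' : 10 * (r : ℝ) ^ 2 * hR ≤ mR * ε ^ 2 := by
    have := mul_le_mul_of_nonneg_right hUhR (le_of_lt hεsq)
    calc 10 * (r : ℝ) ^ 2 * hR = (10 * (r : ℝ) ^ 2) / ε ^ 2 * hR * ε ^ 2 := by
          field_simp
      _ ≤ mR * ε ^ 2 := this
  have hcr : (2 * (r : ℝ) - 3 + ε) ≤ (r : ℝ) ^ 2 := by nlinarith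
  have hεm : ε * mR < (2 * (r : ℝ) - 3 + ε) * hR := by nlinarith
  have hεm2 : ε * mR < (r : ℝ) ^ 2 * hR :=
    lt_of_lt_of_le hεm (mul_le_mul_of_nonneg_right hcr hhR0)
  nlinarith [mul_nonneg hmR0 (le_of_lt hε0), mul_le_mul_of_nonneg_left (le_of_lt hε1) (mul_nonneg hmR0 (le_of_lt hε0))]
end

section
/- Let H = (A, B, E) be an r-uniform bipartite hypergraph (r ≥ 2), M a partial matching in H, and T = (L_0, …, L_{ℓ+1}) an alternating tree with respect to M, with layers L_i = (X_i, Y_i). Suppose every edge of X_{≤ℓ} that is not immediately addable has at least one blocking edge (which holds by definition), and let k denote the number of immediately addable edges (with respect to M) contained in X_{≤ℓ}. Then |B(X_{≤ℓ+1} ∪ Y_{≤ℓ+1})| ≤ (2r − 3)·|Y_1 ∪ … ∪ Y_ℓ| + k·(r − 1) + |X_{ℓ+1}|·(r − 1)². -/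
open Finset

variable {V : Type*} [DecidableEq V]

-- HELPERS (tested)
lemma BVerts_card_le (B : Finset V) (F : Finset (Finset V)) (c : ℕ)
    (h : ∀ e ∈ F, (e ∩ B).card ≤ c) : (BVerts B F).card ≤ F.card * c := by
  calc (BVerts B F).card ≤ ∑ e ∈ F, (e ∩ B).card := Finset.card_biUnion_le
    _ ≤ ∑ _e ∈ F, c := Finset.sum_le_sum h
    _ = F.card * c := by rw [Finset.sum_const, smul_eq_mul]

lemma BVerts_union (B : Finset V) (F G : Finset (Finset V)) :
    BVerts B (F ∪ G) = BVerts B F ∪ BVerts B G := by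
  ext x
  simp only [BVerts, Finset.mem_biUnion, Finset.mem_union, Finset.mem_inter]
  constructor
  · rintro ⟨e, he | he, hx⟩
    · exact Or.inl ⟨e, he, hx⟩
    · exact Or.inr ⟨e, he, hx⟩
  · rintro (⟨e, he, hx⟩ | ⟨e, he, hx⟩)
    · exact ⟨e, Or.inl he, hx⟩
    · exact ⟨e, Or.inr he, hx⟩

lemma layer_B_bound {r : ℕ} {B : Finset V} {E M Xi Yi : Finset (Finset V)}
    (hE : ∀ e ∈ E, (e ∩ B).card = r - 1) (hME : M ⊆ E)
    (hL : IsLayer B E M Xi Yi) :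
    (BVerts B (Xi ∪ Yi)).card ≤ Xi.card * (r - 1) + Yi.card * (r - 2) := by
  obtain ⟨hXE, _, hYchar, _⟩ := hL
  rw [BVerts_union]
  calc (BVerts B Xi ∪ BVerts B Yi).card
      ≤ (BVerts B Xi).card + (BVerts B Yi \ BVerts B Xi).card := by
        rw [Finset.union_comm (BVerts B Xi)]
        rw [← Finset.card_sdiff_add_card]
        omega
    _ ≤ Xi.card * (r - 1) + Yi.card * (r - 2) := by
        gcongr
        · exact BVerts_card_le B Xi (r-1) fun e he =>
            (hE e ((Finset.mem_sdiff.mp (hXE he)).1)).le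
        · calc (BVerts B Yi \ BVerts B Xi).card
              ≤ (Yi.biUnion fun f => (f ∩ B) \ BVerts B Xi).card := by
                apply Finset.card_le_card
                intro x hx
                rw [Finset.mem_sdiff] at hx
                obtain ⟨hx1, hx2⟩ := hx
                rw [BVerts, Finset.mem_biUnion] at hx1
                obtain ⟨f, hf, hxf⟩ := hx1
                exact Finset.mem_biUnion.mpr ⟨f, hf, Finset.mem_sdiff.mpr ⟨hxf, hx2⟩⟩
            _ ≤ ∑ f ∈ Yi, ((f ∩ B) \ BVerts B Xi).card := Finset.card_biUnion_le
            _ ≤ ∑ _f ∈ Yi, (r - 2) := by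
                apply Finset.sum_le_sum
                intro f hf
                obtain ⟨hfM, e, heX, hne⟩ := (hYchar f).mp hf
                obtain ⟨x, hx⟩ := hne
                simp only [Finset.mem_inter] at hx
                have hxB : x ∈ BVerts B Xi :=
                  Finset.mem_biUnion.mpr ⟨e, heX, Finset.mem_inter.mpr ⟨hx.1.2, hx.2⟩⟩
                have hsub : (f ∩ B) \ BVerts B Xi ⊆ (f ∩ B).erase x := by
                  intro y hy
                  rw [Finset.mem_sdiff] at hy
                  refine Finset.mem_erase.mpr ⟨?_, hy.1⟩
                  rintro rfl; exact hy.2 hxB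
                have := Finset.card_le_card hsub
                have hcard : ((f ∩ B).erase x).card ≤ r - 2 := by
                  have hxfB : x ∈ f ∩ B := Finset.mem_inter.mpr ⟨hx.1.1, hx.2⟩
                  rw [Finset.card_erase_of_mem hxfB, hE f (hME hfM)]
                  omega
                omega
            _ = Yi.card * (r - 2) := by rw [Finset.sum_const, smul_eq_mul]

lemma fiber_bound {B : Finset V} {M : Finset (Finset V)}
    (hMd : ∀ e ∈ M, ∀ f ∈ M, e ≠ f → Disjoint e f) (e : Finset V) :
    (M.filter fun f => (f ∩ e ∩ B).Nonempty).card ≤ (e ∩ B).card := by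
  classical
  apply Finset.card_le_card_of_surjOn
    (fun x => if h : ∃ g ∈ M, x ∈ g then h.choose else ∅)
  intro f hf
  simp only [Finset.coe_filter, Set.mem_setOf_eq] at hf
  obtain ⟨hfM, x, hx⟩ := hf
  simp only [Finset.mem_inter] at hx
  refine ⟨x, ?_, ?_⟩
  · exact Finset.mem_coe.mpr (Finset.mem_inter.mpr ⟨hx.1.2, hx.2⟩)
  · have h : ∃ g ∈ M, x ∈ g := ⟨f, hfM, hx.1.1⟩
    simp only [dif_pos h]
    obtain ⟨hgM, hxg⟩ := h.choose_spec
    by_contra hne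
    exact Finset.disjoint_left.mp (hMd _ hgM f hfM hne) hxg hx.1.1

lemma Y_card_le {r : ℕ} {B : Finset V} {E M Xi Yi : Finset (Finset V)}
    (hE : ∀ e ∈ E, (e ∩ B).card = r - 1)
    (hMd : ∀ e ∈ M, ∀ f ∈ M, e ≠ f → Disjoint e f)
    (hL : IsLayer B E M Xi Yi) :
    Yi.card ≤ Xi.card * (r - 1) := by
  classical
  obtain ⟨hXE, _, hYchar, _⟩ := hL
  have hsub : Yi ⊆ Xi.biUnion fun e => M.filter fun f => (f ∩ e ∩ B).Nonempty := by
    intro f hf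
    obtain ⟨hfM, e, heX, hne⟩ := (hYchar f).mp hf
    exact Finset.mem_biUnion.mpr ⟨e, heX, Finset.mem_filter.mpr ⟨hfM, hne⟩⟩
  calc Yi.card ≤ _ := Finset.card_le_card hsub
    _ ≤ ∑ e ∈ Xi, (M.filter fun f => (f ∩ e ∩ B).Nonempty).card := Finset.card_biUnion_le
    _ ≤ ∑ _e ∈ Xi, (r - 1) := by
        apply Finset.sum_le_sum
        intro e he
        have := fiber_bound (B := B) hMd e
        rw [hE e ((Finset.mem_sdiff.mp (hXE he)).1)] at this
        exact this
    _ = Xi.card * (r - 1) := by rw [Finset.sum_const, smul_eq_mul]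

lemma X_card_le {B : Finset V} {E M Xi Yi : Finset (Finset V)}
    (hL : IsLayer B E M Xi Yi) [DecidablePred fun e : Finset V => ∀ f ∈ M, f ∩ e ∩ B = ∅] :
    Xi.card ≤ Yi.card + (Xi.filter fun e => ∀ f ∈ M, f ∩ e ∩ B = ∅).card := by
  classical
  obtain ⟨_, _, hYchar, hYuniq⟩ := hL
  have hsplit := Finset.card_filter_add_card_filter_not
    (s := Xi) (p := fun e => ∀ f ∈ M, f ∩ e ∩ B = ∅)
  have hinj : (Xi.filter fun e => ¬ ∀ f ∈ M, f ∩ e ∩ B = ∅).card ≤ Yi.card := by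
    apply Finset.card_le_card_of_injOn
      (fun e => if h : ∃ f ∈ M, (f ∩ e ∩ B).Nonempty then h.choose else ∅)
    · intro e he
      rw [Finset.mem_coe, Finset.mem_filter] at he
      obtain ⟨heX, hne⟩ := he
      push_neg at hne
      obtain ⟨f, hfM, hfne⟩ := hne
      have h : ∃ f ∈ M, (f ∩ e ∩ B).Nonempty :=
        ⟨f, hfM, hfne⟩
      simp only [dif_pos h]
      obtain ⟨hgM, hgne⟩ := h.choose_spec
      exact (hYchar _).mpr ⟨hgM, e, heX, hgne⟩
    · intro e1 he1 e2 he2 heq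
      simp only [Finset.coe_filter, Set.mem_setOf_eq] at he1 he2
      obtain ⟨he1X, h1⟩ := he1
      obtain ⟨he2X, h2⟩ := he2
      push_neg at h1 h2
      obtain ⟨f1, hf1M, hf1⟩ := h1
      obtain ⟨f2, hf2M, hf2⟩ := h2
      have h1' : ∃ f ∈ M, (f ∩ e1 ∩ B).Nonempty :=
        ⟨f1, hf1M, hf1⟩
      have h2' : ∃ f ∈ M, (f ∩ e2 ∩ B).Nonempty :=
        ⟨f2, hf2M, hf2⟩
      simp only [dif_pos h1', dif_pos h2'] at heq
      obtain ⟨hg1M, hg1⟩ := h1'.choose_spec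
      obtain ⟨hg2M, hg2⟩ := h2'.choose_spec
      have hgY : h1'.choose ∈ Yi := (hYchar _).mpr ⟨hg1M, e1, he1X, hg1⟩
      obtain ⟨e, ⟨heX, hee⟩, huniq⟩ := hYuniq _ hgY
      have h1e : e1 = e := huniq e1 ⟨he1X, hg1⟩
      rw [← heq] at hg2
      have h2e : e2 = e := huniq e2 ⟨he2X, hg2⟩
      rw [h1e, h2e]
  omega


/-- For an alternating tree `(L_0, …, L_{ℓ+1})`, if `k` is the number of immediately
addable edges in `X_{≤ℓ}`, then
`|B(X_{≤ℓ+1} ∪ Y_{≤ℓ+1})| ≤ (2r − 3)·|Y_1 ∪ … ∪ Y_ℓ| + k(r − 1) + |X_{ℓ+1}|(r − 1)²`. -/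
theorem tree_B_vertices_bound_with_addable {V : Type*} [DecidableEq V]
    (r : ℕ) (hr : 2 ≤ r) (A B : Finset V) (E : Finset (Finset V))
    (hH : IsBipHypergraph r A B E)
    (M : Finset (Finset V)) (hM : IsPartialMatching E M)
    (a0 : V) (ℓ : ℕ) (X Y : ℕ → Finset (Finset V))
    (hT : IsAltTree A B E M a0 (ℓ + 1) X Y)
    (hblock : ∀ e ∈ upTo X ℓ, ¬ ImmAddable B M e → ∃ f ∈ M, (f ∩ e ∩ B).Nonempty) :
    (BVerts B (upTo X (ℓ + 1) ∪ upTo Y (ℓ + 1))).card ≤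
      (2 * r - 3) * (unionIcc Y 1 ℓ).card +
        ((upTo X ℓ).filter fun e => ∀ f ∈ M, f ∩ e ∩ B = ∅).card * (r - 1) +
        (X (ℓ + 1)).card * (r - 1) ^ 2 := by
  obtain ⟨hAB, hHE⟩ := hH
  have hE : ∀ e ∈ E, (e ∩ B).card = r - 1 := fun e he => (hHE e he).2.2
  obtain ⟨hME, hMd⟩ := hM
  obtain ⟨ha0A, _, hX0, hY0, hLayers, _, hDisj⟩ := hT
  -- every edge of E has nonempty B-part
  have hEne : ∀ e ∈ E, (e ∩ B).Nonempty := by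
    intro e he
    rw [← Finset.card_pos, hE e he]
    omega
  -- Step 1: cover by layers
  have hcover : BVerts B (upTo X (ℓ+1) ∪ upTo Y (ℓ+1)) ⊆
      (Finset.range (ℓ+2)).biUnion fun i => BVerts B (X i ∪ Y i) := by
    intro x hx
    rw [BVerts, Finset.mem_biUnion] at hx
    obtain ⟨e, he, hxe⟩ := hx
    rw [Finset.mem_union] at he
    rcases he with he | he <;>
      · rw [upTo, Finset.mem_biUnion] at he
        obtain ⟨i, hi, hei⟩ := he
        rw [Finset.mem_range] at hi
        refine Finset.mem_biUnion.mpr ⟨i, Finset.mem_range.mpr (by omega), ?_⟩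
        refine Finset.mem_biUnion.mpr ⟨e, ?_, hxe⟩
        rw [Finset.mem_union]
        first
          | exact Or.inl hei
          | exact Or.inr hei
  have h1 : (BVerts B (upTo X (ℓ+1) ∪ upTo Y (ℓ+1))).card ≤
      ∑ i ∈ Finset.range (ℓ+2), (BVerts B (X i ∪ Y i)).card :=
    le_trans (Finset.card_le_card hcover) Finset.card_biUnion_le
  -- layer 0 contributes nothing
  have h0 : (BVerts B (X 0 ∪ Y 0)).card = 0 := by
    rw [hX0, hY0, Finset.empty_union]
    rw [Finset.card_eq_zero]
    ext x
    simp only [BVerts, Finset.mem_biUnion, Finset.mem_singleton, Finset.mem_inter,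
      Finset.notMem_empty, iff_false, not_exists]
    rintro e ⟨rfl, hx1, hx2⟩
    rw [Finset.mem_singleton] at hx1
    subst hx1
    exact Finset.disjoint_left.mp hAB ha0A hx2
  -- split the range
  have hrange : Finset.range (ℓ+1) = insert 0 (Finset.Icc 1 ℓ) := by
    ext i
    simp only [Finset.mem_range, Finset.mem_insert, Finset.mem_Icc]
    omega
  have h2 : ∑ i ∈ Finset.range (ℓ+2), (BVerts B (X i ∪ Y i)).card =
      ∑ i ∈ Finset.Icc 1 ℓ, (BVerts B (X i ∪ Y i)).card
        + (BVerts B (X (ℓ+1) ∪ Y (ℓ+1))).card := by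
    rw [Finset.sum_range_succ, hrange, Finset.sum_insert (by simp), h0, zero_add]
  -- per-layer bound for middle layers
  classical
  have hmid : ∀ i ∈ Finset.Icc 1 ℓ, (BVerts B (X i ∪ Y i)).card ≤
      (Y i).card * (2 * r - 3)
        + ((X i).filter fun e => ∀ f ∈ M, f ∩ e ∩ B = ∅).card * (r - 1) := by
    intro i hi
    rw [Finset.mem_Icc] at hi
    have hLi := hLayers i hi.1 (by omega)
    calc (BVerts B (X i ∪ Y i)).card
        ≤ (X i).card * (r - 1) + (Y i).card * (r - 2) :=
          layer_B_bound hE hME hLi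
      _ ≤ ((Y i).card + ((X i).filter fun e => ∀ f ∈ M, f ∩ e ∩ B = ∅).card) * (r - 1)
            + (Y i).card * (r - 2) := by
          gcongr
          exact X_card_le hLi
      _ = (Y i).card * (2 * r - 3)
            + ((X i).filter fun e => ∀ f ∈ M, f ∩ e ∩ B = ∅).card * (r - 1) := by
          have h23 : 2 * r - 3 = (r - 1) + (r - 2) := by omega
          rw [h23]
          ring
  -- last layer bound
  have hlast : (BVerts B (X (ℓ+1) ∪ Y (ℓ+1))).card ≤ (X (ℓ+1)).card * (r - 1)^2 := by
    have hLl := hLayers (ℓ+1) (by omega) le_rfl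
    calc (BVerts B (X (ℓ+1) ∪ Y (ℓ+1))).card
        ≤ (X (ℓ+1)).card * (r - 1) + (Y (ℓ+1)).card * (r - 2) :=
          layer_B_bound hE hME hLl
      _ ≤ (X (ℓ+1)).card * (r - 1) + ((X (ℓ+1)).card * (r - 1)) * (r - 2) := by
          gcongr
          exact Y_card_le hE hMd hLl
      _ = (X (ℓ+1)).card * (r - 1)^2 := by
          have h12 : (r - 1)^2 = (r - 1) + (r - 1) * (r - 2) := by
            have : r - 1 = (r - 2) + 1 := by omega
            rw [this]; ring
          rw [h12]; ring
  -- Y_i pairwise disjoint (as edge sets)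
  have hBne : ∀ i, 1 ≤ i → i ≤ ℓ + 1 → ∀ f, f ∈ X i ∪ Y i →
      ∃ x, x ∈ BVerts B (X i ∪ Y i) ∧ x ∈ f ∩ B := by
    intro i hi1 hi2 f hf
    have hfE : f ∈ E := by
      obtain ⟨hXE, _, hYchar, _⟩ := hLayers i hi1 hi2
      rw [Finset.mem_union] at hf
      rcases hf with hf | hf
      · exact (Finset.mem_sdiff.mp (hXE hf)).1
      · exact hME ((hYchar f).mp hf).1
    obtain ⟨x, hx⟩ := hEne f hfE
    exact ⟨x, Finset.mem_biUnion.mpr ⟨f, hf, hx⟩, hx⟩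
  have hYdisj : ∀ i ∈ Finset.Icc 1 ℓ, ∀ j ∈ Finset.Icc 1 ℓ, i ≠ j →
      Disjoint (Y i) (Y j) := by
    intro i hi j hj hij
    rw [Finset.mem_Icc] at hi hj
    rw [Finset.disjoint_left]
    intro f hfi hfj
    obtain ⟨x, hxi, hxf⟩ := hBne i hi.1 (by omega) f (Finset.mem_union_right _ hfi)
    have hxj : x ∈ BVerts B (X j ∪ Y j) :=
      Finset.mem_biUnion.mpr ⟨f, Finset.mem_union_right _ hfj, hxf⟩
    exact Finset.disjoint_left.mp (hDisj i j (by omega) (by omega) hij) hxi hxj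
  have hYsum : ∑ i ∈ Finset.Icc 1 ℓ, (Y i).card = (unionIcc Y 1 ℓ).card :=
    (Finset.card_biUnion hYdisj).symm
  -- sum of k_i ≤ k
  have hXdisj : ∀ i ∈ Finset.Icc 1 ℓ, ∀ j ∈ Finset.Icc 1 ℓ, i ≠ j →
      Disjoint ((X i).filter fun e => ∀ f ∈ M, f ∩ e ∩ B = ∅)
        ((X j).filter fun e => ∀ f ∈ M, f ∩ e ∩ B = ∅) := by
    intro i hi j hj hij
    rw [Finset.mem_Icc] at hi hj
    rw [Finset.disjoint_left]
    intro e hei hej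
    rw [Finset.mem_filter] at hei hej
    obtain ⟨x, hxi, hxe⟩ := hBne i hi.1 (by omega) e (Finset.mem_union_left _ hei.1)
    have hxj : x ∈ BVerts B (X j ∪ Y j) :=
      Finset.mem_biUnion.mpr ⟨e, Finset.mem_union_left _ hej.1, hxe⟩
    exact Finset.disjoint_left.mp (hDisj i j (by omega) (by omega) hij) hxi hxj
  have hksum : ∑ i ∈ Finset.Icc 1 ℓ, ((X i).filter fun e => ∀ f ∈ M, f ∩ e ∩ B = ∅).card
      ≤ ((upTo X ℓ).filter fun e => ∀ f ∈ M, f ∩ e ∩ B = ∅).card := by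
    rw [← Finset.card_biUnion hXdisj]
    apply Finset.card_le_card
    intro e he
    rw [Finset.mem_biUnion] at he
    obtain ⟨i, hi, hei⟩ := he
    rw [Finset.mem_Icc] at hi
    rw [Finset.mem_filter] at hei ⊢
    refine ⟨?_, hei.2⟩
    exact Finset.mem_biUnion.mpr ⟨i, Finset.mem_range.mpr (by omega), hei.1⟩
  -- assemble
  calc (BVerts B (upTo X (ℓ+1) ∪ upTo Y (ℓ+1))).card
      ≤ ∑ i ∈ Finset.range (ℓ+2), (BVerts B (X i ∪ Y i)).card := h1
    _ = ∑ i ∈ Finset.Icc 1 ℓ, (BVerts B (X i ∪ Y i)).card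
        + (BVerts B (X (ℓ+1) ∪ Y (ℓ+1))).card := h2
    _ ≤ ∑ i ∈ Finset.Icc 1 ℓ, ((Y i).card * (2 * r - 3)
          + ((X i).filter fun e => ∀ f ∈ M, f ∩ e ∩ B = ∅).card * (r - 1))
        + (X (ℓ+1)).card * (r - 1)^2 :=
        Nat.add_le_add (Finset.sum_le_sum hmid) hlast
    _ = (2 * r - 3) * (∑ i ∈ Finset.Icc 1 ℓ, (Y i).card)
        + (∑ i ∈ Finset.Icc 1 ℓ,
            ((X i).filter fun e => ∀ f ∈ M, f ∩ e ∩ B = ∅).card) * (r - 1)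
        + (X (ℓ+1)).card * (r - 1)^2 := by
        rw [Finset.sum_add_distrib, ← Finset.sum_mul, ← Finset.sum_mul]
        ring
    _ ≤ (2 * r - 3) * (unionIcc Y 1 ℓ).card
        + ((upTo X ℓ).filter fun e => ∀ f ∈ M, f ∩ e ∩ B = ∅).card * (r - 1)
        + (X (ℓ+1)).card * (r - 1)^2 := by
        rw [hYsum]
        gcongr
end

section
/- Let 0 < ε < 1, r ≥ 2, μ := ε²/(10r²), U := ⌈1/μ⌉, and let H = (A, B, E) be an r-uniform bipartite hypergraph satisfying τ(E_S) > (2r − 3 + ε)(|S| − 1) for every S ⊆ A. Let M be a partial matching in H and T = (L_0, …, L_{ℓ+1}) an alternating tree with respect to M, with layers L_i = (X_i, Y_i), such that: (i) 1 + |Y_1 ∪ … ∪ Y_ℓ| ≥ ⌈5r²/ε⌉; (ii) for each 1 ≤ i ≤ ℓ, at most μ·|X_i| edges of X_i are immediately addable with respect to M; (iii) there exist sets Z ⊆ A(Y_{≤ℓ}) with |Z| ≤ μ·|X_{≤ℓ}| and W ⊆ B with |W| ≤ μ·|X_{≤ℓ}|·(r − 1)² such that every vertex ā ∈ A(Y_{≤ℓ})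 \ Z contained in fewer than U edges of X_{≤ℓ+1} has no edge e ∈ E with ā ∈ e whose set e ∩ B is disjoint from B(X_{≤ℓ+1} ∪ Y_{≤ℓ+1}) ∪ W. Then |X_{ℓ+1}| > (ε/(5r²))·(1 + |Y_1 ∪ … ∪ Y_ℓ|). -/
open Finset

variable {V : Type*} [DecidableEq V]

lemma icc_sum_aux {β : Type*} [AddCommMonoid β] (n : ℕ) (f : ℕ → β) :
    ∑ i ∈ Finset.range (n+1), f i = f 0 + ∑ i ∈ Finset.Icc 1 n, f i := by
  rw [show Finset.range (n+1) = insert 0 (Finset.Icc 1 n) by ext x; simp; omega,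
    Finset.sum_insert (by simp)]

lemma upTo_card_le {V : Type*} [DecidableEq V] (F : ℕ → Finset (Finset V)) (hF0 : F 0 = ∅)
    (t : ℕ) : (upTo F t).card ≤ ∑ i ∈ Finset.Icc 1 t, (F i).card := by
  calc (upTo F t).card ≤ ∑ i ∈ Finset.range (t+1), (F i).card := Finset.card_biUnion_le
  _ = _ := by rw [icc_sum_aux, hF0]; simp
set_option maxHeartbeats 1600000 in
/-- If the tree is large (`1 + |Y_1 ∪ … ∪ Y_ℓ| ≥ ⌈5r²/ε⌉`), no layer is collapsible, and
apart from small exceptional sets `Z ⊆ A(Y_{≤ℓ})` and `W ⊆ B` no low-degree tree vertex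
has an addable edge, then `|X_{ℓ+1}| > (ε/(5r²))·(1 + |Y_1 ∪ … ∪ Y_ℓ|)`. -/
theorem last_layer_large {V : Type*} [DecidableEq V]
    (ε : ℝ) (hε0 : 0 < ε) (hε1 : ε < 1) (r : ℕ) (hr : 2 ≤ r)
    (A B : Finset V) (E : Finset (Finset V))
    (hH : IsBipHypergraph r A B E)
    (hHax : ∀ S ⊆ A,
      (2 * (r : ℝ) - 3 + ε) * ((S.card : ℝ) - 1) < (tau B (edgesOn E S) : ℝ))
    (M : Finset (Finset V)) (hM : IsPartialMatching E M)
    (a0 : V) (ℓ : ℕ) (X Y : ℕ → Finset (Finset V))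
    (hT : IsAltTree A B E M a0 (ℓ + 1) X Y)
    (hbig : ⌈(5 * (r : ℝ) ^ 2) / ε⌉₊ ≤ 1 + (unionIcc Y 1 ℓ).card)
    (hnocollapse : ∀ i, 1 ≤ i → i ≤ ℓ →
      ((((X i).filter fun e => ∀ f ∈ M, f ∩ e ∩ B = ∅)).card : ℝ) ≤
        (ε ^ 2 / (10 * (r : ℝ) ^ 2)) * ((X i).card : ℝ))
    (hnoadd : ∃ Z ⊆ AVerts A (upTo Y ℓ),
      (Z.card : ℝ) ≤ (ε ^ 2 / (10 * (r : ℝ) ^ 2)) * ((upTo X ℓ).card : ℝ) ∧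
      ∃ W ⊆ B,
        (W.card : ℝ) ≤ (ε ^ 2 / (10 * (r : ℝ) ^ 2)) * ((upTo X ℓ).card : ℝ) *
          ((r : ℝ) - 1) ^ 2 ∧
        ∀ a ∈ AVerts A (upTo Y ℓ) \ Z,
          ((upTo X (ℓ + 1)).filter fun e => a ∈ e).card <
              ⌈1 / (ε ^ 2 / (10 * (r : ℝ) ^ 2))⌉₊ →
            ¬ ∃ e ∈ E, a ∈ e ∧
                Disjoint (e ∩ B) (BVerts B (upTo X (ℓ + 1) ∪ upTo Y (ℓ + 1)) ∪ W)) :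
    (ε / (5 * (r : ℝ) ^ 2)) * (1 + (unionIcc Y 1 ℓ).card : ℝ) < ((X (ℓ + 1)).card : ℝ) := by
  classical
  by_contra hcon
  push_neg at hcon
  obtain ⟨hAB, hE⟩ := hH
  obtain ⟨hME, hMdisj⟩ := hM
  obtain ⟨ha0A, ha0M, hX0, hY0, hLayer, _hAsub, hBdisj⟩ := hT
  obtain ⟨Z, hZS, hZcard, W, hWB, hWcard, hnoext⟩ := hnoadd
  have hR2 : (2:ℝ) ≤ (r:ℝ) := by exact_mod_cast hr
  have hR0 : (0:ℝ) < (r:ℝ) := by linarith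
  set R : ℝ := (r : ℝ) with hRdef
  set μ : ℝ := ε ^ 2 / (10 * R ^ 2) with hμdef
  have hμ0 : 0 < μ := by positivity
  have hμ40 : μ ≤ 1/40 := by
    rw [hμdef, div_le_div_iff₀ (by positivity) (by norm_num)]
    nlinarith only [hε0, hε1, hR2]
  set S : Finset V := AVerts A (upTo Y ℓ) with hSdef
  set U : ℕ := ⌈1/μ⌉₊ with hUdef
  set Hi : Finset V := S.filter (fun a => U ≤ ((upTo X (ℓ+1)).filter fun e => a ∈ e).card) with hHidef
  set S' : Finset V := S \ (Z ∪ Hi) with hS'def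
  set C : Finset V := BVerts B (upTo X (ℓ+1) ∪ upTo Y (ℓ+1)) ∪ W with hCdef
  -- basic facts about layers
  have hrB : ∀ e ∈ E, (e ∩ B).Nonempty := by
    intro e he
    rw [← Finset.card_pos, (hE e he).2.2]
    omega
  have hYM : ∀ i, 1 ≤ i → i ≤ ℓ+1 → Y i ⊆ M := by
    intro i h1 h2 f hf
    exact (((hLayer i h1 h2).2.2.1 f).mp hf).1
  have hXE : ∀ i, i ≤ ℓ+1 → X i ⊆ E := by
    intro i h2 e he
    rcases Nat.eq_zero_or_pos i with h | h
    · rw [h, hX0] at he; exact absurd he (Finset.notMem_empty e)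
    · exact (Finset.mem_sdiff.mp ((hLayer i h h2).1 he)).1
  have hYB : ∀ i, 1 ≤ i → i ≤ ℓ+1 → ∀ f ∈ Y i, (f ∩ B) ⊆ BVerts B (X i ∪ Y i) := by
    intro i h1 h2 f hf v hv
    exact Finset.mem_biUnion.mpr ⟨f, Finset.mem_union_right _ hf, hv⟩
  have hYdisj : ∀ i ∈ Finset.Icc 1 ℓ, ∀ j ∈ Finset.Icc 1 ℓ, i ≠ j →
      Disjoint (Y i) (Y j) := by
    intro i hi j hj hij
    simp only [Finset.mem_Icc] at hi hj
    rw [Finset.disjoint_left]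
    intro f hfi hfj
    obtain ⟨v, hv⟩ := hrB f (hME (hYM i hi.1 (by omega) hfi))
    have hd := hBdisj i j (by omega) (by omega) hij
    rw [Finset.disjoint_left] at hd
    exact hd (hYB i hi.1 (by omega) f hfi hv) (hYB j hj.1 (by omega) f hfj hv)
  -- a choice function
  let pick : Finset V → V := fun s => if h : s.Nonempty then h.choose else a0
  have hpick : ∀ s : Finset V, s.Nonempty → pick s ∈ s := by
    intro s h
    simp only [pick, dif_pos h]
    exact h.choose_spec
  have hSA : S ⊆ A := by
    intro a ha
    rw [hSdef, AVerts] at ha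
    obtain ⟨e, _, hae⟩ := Finset.mem_biUnion.mp ha
    exact (Finset.mem_inter.mp hae).2
  have hCB : C ⊆ B := by
    rw [hCdef]
    apply Finset.union_subset _ hWB
    intro b hb
    obtain ⟨e, _, hbe⟩ := Finset.mem_biUnion.mp hb
    exact (Finset.mem_inter.mp hbe).2
  -- the set C is a cover of the edges on S'
  have hcov : ∀ e ∈ edgesOn E S', (e ∩ C).Nonempty := by
    intro e he
    obtain ⟨heE, hecard⟩ := Finset.mem_filter.mp he
    obtain ⟨a, ha⟩ := Finset.card_eq_one.mp hecard
    have haS' : a ∈ S' := by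
      have : a ∈ e ∩ S' := ha ▸ Finset.mem_singleton_self a
      exact (Finset.mem_inter.mp this).2
    have hae : a ∈ e := by
      have : a ∈ e ∩ S' := ha ▸ Finset.mem_singleton_self a
      exact (Finset.mem_inter.mp this).1
    rw [hS'def, Finset.mem_sdiff, Finset.mem_union] at haS'
    push_neg at haS'
    have haS := haS'.1
    have haZ := haS'.2.1
    have haHi := haS'.2.2
    have hdeg : ((upTo X (ℓ+1)).filter fun e => a ∈ e).card < U := by
      by_contra hc
      push_neg at hc
      exact haHi (Finset.mem_filter.mpr ⟨haS, hc⟩)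
    have := hnoext a (Finset.mem_sdiff.mpr ⟨haS, haZ⟩) hdeg
    push_neg at this
    have hnd := this e heE hae
    rw [Finset.not_disjoint_iff] at hnd
    obtain ⟨v, hv1, hv2⟩ := hnd
    exact ⟨v, Finset.mem_inter.mpr ⟨Finset.mem_of_mem_inter_left hv1, hv2⟩⟩
  have htau : (tau B (edgesOn E S') : ℝ) ≤ (C.card : ℝ) := by
    have : tau B (edgesOn E S') ≤ C.card :=
      Nat.sInf_le ⟨C, hCB, rfl, hcov⟩
    exact_mod_cast this
  have hkey : (2*R - 3 + ε) * ((S'.card : ℝ) - 1) < (C.card : ℝ) :=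
    lt_of_lt_of_le (hHax S' (fun a ha => hSA (Finset.mem_sdiff.mp ha).1)) htau
  set y1 : ℝ := ((unionIcc Y 1 ℓ).card : ℝ) with hy1def
  set xs : ℝ := ((∑ i ∈ Finset.Icc 1 ℓ, (X i).card : ℕ) : ℝ) with hxsdef
  set x' : ℝ := ((X (ℓ+1)).card : ℝ) with hx'def
  have hx'0 : 0 ≤ x' := Nat.cast_nonneg _
  have hxs0 : 0 ≤ xs := Nat.cast_nonneg _
  have hy10 : 0 ≤ y1 := Nat.cast_nonneg _
  -- the Y-layers are pairwise disjoint, so their cards sum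
  have hy1sum : (∑ i ∈ Finset.Icc 1 ℓ, ((Y i).card:ℝ)) = y1 := by
    rw [hy1def, unionIcc, Finset.card_biUnion hYdisj]
    push_cast
    rfl
  -- |upTo X ℓ| ≤ xs, |upTo X (ℓ+1)| ≤ xs + x'
  have hupX : ((upTo X ℓ).card : ℝ) ≤ xs := by
    rw [hxsdef]; exact_mod_cast upTo_card_le X hX0 ℓ
  have hupX' : ((upTo X (ℓ+1)).card : ℝ) ≤ xs + x' := by
    have h1 : (upTo X (ℓ+1)).card ≤ ∑ i ∈ Finset.Icc 1 (ℓ+1), (X i).card :=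
      upTo_card_le X hX0 (ℓ+1)
    rw [Finset.sum_Icc_succ_top (by omega)] at h1
    rw [hxsdef, hx'def]
    exact_mod_cast h1
  -- |S| ≥ 1 + y1
  have hSge : 1 + y1 ≤ (S.card : ℝ) := by
    have hYuM : unionIcc Y 1 ℓ ⊆ M := by
      intro f hf
      obtain ⟨i, hi, hfi⟩ := Finset.mem_biUnion.mp hf
      simp only [Finset.mem_Icc] at hi
      exact hYM i hi.1 (by omega) hfi
    have ha0nm : {a0} ∉ unionIcc Y 1 ℓ := by
      intro h
      exact ha0M {a0} (hYuM h) (Finset.mem_singleton_self a0)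
    have hgmem : ∀ f ∈ M, pick (f ∩ A) ∈ f ∩ A := by
      intro f hf
      apply hpick
      rw [← Finset.card_pos, (hE f (hME hf)).2.1]
      omega
    have hga0 : pick ({a0} ∩ A) = a0 := by
      have h1 : ({a0} : Finset V) ∩ A = {a0} :=
        Finset.singleton_inter_of_mem ha0A
      have h2 := hpick ({a0} ∩ A) (by rw [h1]; exact ⟨a0, Finset.mem_singleton_self a0⟩)
      exact Finset.mem_singleton.mp (Finset.mem_of_mem_inter_left h2)
    have hcard : (insert {a0} (unionIcc Y 1 ℓ)).card ≤ S.card := by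
      apply Finset.card_le_card_of_injOn (fun f => pick (f ∩ A))
      · intro f hf
        rcases Finset.mem_insert.mp hf with h | h
        · subst h
          beta_reduce
          rw [hga0, hSdef]
          refine Finset.mem_biUnion.mpr ⟨{a0}, ?_, ?_⟩
          · exact Finset.mem_biUnion.mpr ⟨0, Finset.mem_range.mpr (by omega),
              by rw [hY0]; exact Finset.mem_singleton_self _⟩
          · simp [Finset.singleton_inter_of_mem ha0A]
        · have hfM := hYuM h
          refine Finset.mem_biUnion.mpr ⟨f, ?_, hgmem f hfM⟩
          obtain ⟨i, hi, hfi⟩ := Finset.mem_biUnion.mp h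
          simp only [Finset.mem_Icc] at hi
          exact Finset.mem_biUnion.mpr ⟨i, Finset.mem_range.mpr (by omega), hfi⟩
      · intro f1 hf1 f2 hf2 heq
        simp only at heq
        simp only [Finset.coe_insert, Set.mem_insert_iff, Finset.mem_coe] at hf1 hf2
        rcases hf1 with h1 | h1 <;> rcases hf2 with h2 | h2
        · rw [h1, h2]
        · exfalso
          subst h1
          rw [hga0] at heq
          have hm := hgmem f2 (hYuM h2)
          rw [← heq] at hm
          exact ha0M f2 (hYuM h2) (Finset.mem_of_mem_inter_left hm)
        · exfalso
          subst h2
          rw [hga0] at heq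
          have hm := hgmem f1 (hYuM h1)
          rw [heq] at hm
          exact ha0M f1 (hYuM h1) (Finset.mem_of_mem_inter_left hm)
        · by_contra hne
          have hd := hMdisj f1 (hYuM h1) f2 (hYuM h2) hne
          rw [Finset.disjoint_left] at hd
          have hm := hgmem f2 (hYuM h2)
          rw [← heq] at hm
          exact hd (Finset.mem_of_mem_inter_left (hgmem f1 (hYuM h1)))
            (Finset.mem_of_mem_inter_left hm)
    rw [Finset.card_insert_of_notMem ha0nm] at hcard
    rw [hy1def]
    have : ((unionIcc Y 1 ℓ).card : ℝ) + 1 ≤ (S.card : ℝ) := by exact_mod_cast hcard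
    linarith
  -- high-degree vertices are few
  have hHicard : (Hi.card : ℝ) ≤ μ * (xs + x') := by
    have hdisj : ∀ a ∈ Hi, ∀ b ∈ Hi, a ≠ b →
        Disjoint ((upTo X (ℓ+1)).filter fun e => a ∈ e)
          ((upTo X (ℓ+1)).filter fun e => b ∈ e) := by
      intro a ha b hb hab
      rw [Finset.disjoint_left]
      intro e hea heb
      simp only [Finset.mem_filter] at hea heb
      have heE : e ∈ E := by
        obtain ⟨i, hi, hei⟩ := Finset.mem_biUnion.mp hea.1
        exact hXE i (by simp at hi; omega) hei
      have haA : a ∈ A := hSA (Finset.mem_of_mem_filter a ha)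
      have hbA : b ∈ A := hSA (Finset.mem_of_mem_filter b hb)
      have : ({a, b} : Finset V) ⊆ e ∩ A := by
        intro v hv
        rcases Finset.mem_insert.mp hv with h | h
        · subst h; exact Finset.mem_inter.mpr ⟨hea.2, haA⟩
        · rw [Finset.mem_singleton.mp h]; exact Finset.mem_inter.mpr ⟨heb.2, hbA⟩
      have h2 := Finset.card_le_card this
      rw [(hE e heE).2.1, Finset.card_insert_of_notMem (by simpa using hab),
        Finset.card_singleton] at h2
      omega
    have hsum : Hi.card * U ≤ (upTo X (ℓ+1)).card := by
      calc Hi.card * U = ∑ _a ∈ Hi, U := by rw [Finset.sum_const, smul_eq_mul]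
      _ ≤ ∑ a ∈ Hi, ((upTo X (ℓ+1)).filter fun e => a ∈ e).card := by
          apply Finset.sum_le_sum
          intro a ha
          exact (Finset.mem_filter.mp ha).2
      _ = (Hi.biUnion fun a => (upTo X (ℓ+1)).filter fun e => a ∈ e).card :=
          (Finset.card_biUnion hdisj).symm
      _ ≤ (upTo X (ℓ+1)).card := by
          apply Finset.card_le_card
          intro e he
          obtain ⟨a, _, hea⟩ := Finset.mem_biUnion.mp he
          exact Finset.mem_of_mem_filter e hea
    have hUμ : 1/μ ≤ (U:ℝ) := Nat.le_ceil _
    have hUμ' : 1 ≤ μ * (U:ℝ) := by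
      rw [div_le_iff₀ hμ0] at hUμ
      linarith [hUμ]
    have hsum' : (Hi.card : ℝ) * U ≤ xs + x' := by
      calc (Hi.card : ℝ) * U ≤ ((upTo X (ℓ+1)).card : ℝ) := by exact_mod_cast hsum
      _ ≤ xs + x' := hupX'
    have h0 : (0:ℝ) ≤ (Hi.card : ℝ) := Nat.cast_nonneg _
    calc (Hi.card : ℝ) ≤ (Hi.card : ℝ) * (μ * U) := le_mul_of_one_le_right h0 hUμ'
    _ = μ * ((Hi.card : ℝ) * U) := by ring
    _ ≤ μ * (xs + x') := mul_le_mul_of_nonneg_left hsum' hμ0.le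
  have hS'ge : (S.card:ℝ) - (Z.card:ℝ) - (Hi.card:ℝ) ≤ (S'.card:ℝ) := by
    have h1 : S.card ≤ S'.card + (Z ∪ Hi).card := by
      rw [hS'def]
      exact Finset.card_le_card_sdiff_add_card
    have h2 : (Z ∪ Hi).card ≤ Z.card + Hi.card := Finset.card_union_le _ _
    have h1' : (S.card:ℝ) ≤ (S'.card:ℝ) + ((Z ∪ Hi).card:ℝ) := by exact_mod_cast h1
    have h2' : ((Z ∪ Hi).card:ℝ) ≤ (Z.card:ℝ) + (Hi.card:ℝ) := by exact_mod_cast h2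
    linarith
  have hZ' : (Z.card:ℝ) ≤ μ * xs := le_trans hZcard (mul_le_mul_of_nonneg_left hupX hμ0.le)
  -- each non-collapsible layer: |X i| ≤ |Y i| + μ|X i|
  have hxs_le : xs ≤ y1 + μ * xs := by
    have hper : ∀ i ∈ Finset.Icc 1 ℓ, ((X i).card : ℝ) ≤ ((Y i).card : ℝ) + μ * ((X i).card : ℝ) := by
      intro i hi
      simp only [Finset.mem_Icc] at hi
      obtain ⟨hXsub, hXdisjB, hYiff, hYuniq⟩ := hLayer i hi.1 (by omega)
      set Xn : Finset (Finset V) := (X i).filter (fun e => ¬ ∀ f ∈ M, f ∩ e ∩ B = ∅) with hXndef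
      have hsplit : ((X i).filter fun e => ∀ f ∈ M, f ∩ e ∩ B = ∅).card + Xn.card = (X i).card :=
        Finset.card_filter_add_card_filter_not _
      have hXnY : Xn.card ≤ (Y i).card := by
        have hblock : ∀ e ∈ Xn, ∃ f, f ∈ M ∧ (f ∩ e ∩ B).Nonempty := by
          intro e he
          have := (Finset.mem_filter.mp he).2
          push_neg at this
          obtain ⟨f, hfM, hfne⟩ := this
          exact ⟨f, hfM, hfne⟩
        apply Finset.card_le_card_of_injOn
          (fun e => if h : ∃ f, f ∈ M ∧ (f ∩ e ∩ B).Nonempty then h.choose else ∅)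
        · intro e he
          beta_reduce
          rw [dif_pos (hblock e he)]
          obtain ⟨hfM, hfne⟩ := (hblock e he).choose_spec
          exact (hYiff _).mpr ⟨hfM, e, Finset.mem_of_mem_filter e he, hfne⟩
        · intro e1 he1 e2 he2 heq
          simp only [Finset.mem_coe] at he1 he2
          simp only [dif_pos (hblock e1 he1), dif_pos (hblock e2 he2)] at heq
          set f := (hblock e1 he1).choose with hfdef
          obtain ⟨hfM1, hfne1⟩ := (hblock e1 he1).choose_spec
          obtain ⟨hfM2, hfne2⟩ := (hblock e2 he2).choose_spec
          rw [← heq] at hfne2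
          have hfY : f ∈ Y i := (hYiff f).mpr ⟨hfM1, e1, Finset.mem_of_mem_filter e1 he1, hfne1⟩
          obtain ⟨e0, _, huniq⟩ := hYuniq f hfY
          have h1 := huniq e1 ⟨Finset.mem_of_mem_filter e1 he1, hfne1⟩
          have h2 := huniq e2 ⟨Finset.mem_of_mem_filter e2 he2, hfne2⟩
          rw [h1, h2]
      have hXn' : ((X i).card : ℝ) ≤ ((Y i).card : ℝ) +
          (((X i).filter fun e => ∀ f ∈ M, f ∩ e ∩ B = ∅).card : ℝ) := by
        have : (X i).card ≤ (Y i).card + ((X i).filter fun e => ∀ f ∈ M, f ∩ e ∩ B = ∅).card := by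
          omega
        exact_mod_cast this
      have := hnocollapse i hi.1 hi.2
      linarith
    have hsum := Finset.sum_le_sum hper
    have h1 : (∑ i ∈ Finset.Icc 1 ℓ, ((X i).card : ℝ)) = xs := by
      rw [hxsdef]; push_cast; rfl
    rw [Finset.sum_add_distrib, ← Finset.mul_sum, hy1sum, h1] at hsum
    linarith
  -- cover cardinality bound
  have hc1 : ((r-1:ℕ):ℝ) = R - 1 := by
    rw [hRdef, Nat.cast_sub (by omega : 1 ≤ r)]; norm_num
  have hc2 : ((r-2:ℕ):ℝ) = R - 2 := by
    rw [hRdef, Nat.cast_sub (by omega : 2 ≤ r)]; norm_num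
  have hRm1 : (0:ℝ) ≤ R - 1 := by linarith
  have hRm2 : (0:ℝ) ≤ R - 2 := by linarith
  have hcovcard : (C.card:ℝ) ≤ (R-1)*(xs + x') + (R-2)*(y1 + (R-1)*x') + μ * xs * (R-1)^2 := by
    have hXB : ∀ i, 1 ≤ i → i ≤ ℓ+1 → (BVerts B (X i)).card ≤ (r-1) * (X i).card := by
      intro i h1 h2
      calc (BVerts B (X i)).card ≤ ∑ e ∈ X i, (e ∩ B).card := Finset.card_biUnion_le
      _ = ∑ _e ∈ X i, (r-1) := Finset.sum_congr rfl (fun e he => (hE e (hXE i h2 he)).2.2)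
      _ = (X i).card * (r-1) := by rw [Finset.sum_const, smul_eq_mul]
      _ = (r-1) * (X i).card := Nat.mul_comm _ _
    have hlayerB : ∀ i, 1 ≤ i → i ≤ ℓ+1 →
        (BVerts B (X i ∪ Y i)).card ≤ (r-1) * (X i).card + (r-2) * (Y i).card := by
      intro i h1 h2
      obtain ⟨hXsub, hXdisjB, hYiff, hYuniq⟩ := hLayer i h1 h2
      have hBun : BVerts B (X i ∪ Y i) ⊆
          BVerts B (X i) ∪ (BVerts B (Y i) \ BVerts B (X i)) := by
        intro v hv
        obtain ⟨f, hf, hvf⟩ := Finset.mem_biUnion.mp hv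
        rcases Finset.mem_union.mp hf with h | h
        · exact Finset.mem_union_left _ (Finset.mem_biUnion.mpr ⟨f, h, hvf⟩)
        · by_cases hvX : v ∈ BVerts B (X i)
          · exact Finset.mem_union_left _ hvX
          · exact Finset.mem_union_right _
              (Finset.mem_sdiff.mpr ⟨Finset.mem_biUnion.mpr ⟨f, h, hvf⟩, hvX⟩)
      have hY2 : (BVerts B (Y i) \ BVerts B (X i)).card ≤ (r-2) * (Y i).card := by
        have hsub : BVerts B (Y i) \ BVerts B (X i) ⊆
            (Y i).biUnion (fun f => (f ∩ B) \ BVerts B (X i)) := by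
          intro v hv
          obtain ⟨hv1, hv2⟩ := Finset.mem_sdiff.mp hv
          obtain ⟨f, hf, hvf⟩ := Finset.mem_biUnion.mp hv1
          exact Finset.mem_biUnion.mpr ⟨f, hf, Finset.mem_sdiff.mpr ⟨hvf, hv2⟩⟩
        calc (BVerts B (Y i) \ BVerts B (X i)).card
            ≤ ((Y i).biUnion fun f => (f ∩ B) \ BVerts B (X i)).card :=
              Finset.card_le_card hsub
        _ ≤ ∑ f ∈ Y i, ((f ∩ B) \ BVerts B (X i)).card := Finset.card_biUnion_le
        _ ≤ ∑ _f ∈ Y i, (r-2) := by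
            apply Finset.sum_le_sum
            intro f hf
            obtain ⟨hfM, e, heX, hne⟩ := (hYiff f).mp hf
            obtain ⟨v, hv⟩ := hne
            simp only [Finset.mem_inter] at hv
            have hvfB : v ∈ f ∩ B := Finset.mem_inter.mpr ⟨hv.1.1, hv.2⟩
            have hvX : v ∈ BVerts B (X i) :=
              Finset.mem_biUnion.mpr ⟨e, heX, Finset.mem_inter.mpr ⟨hv.1.2, hv.2⟩⟩
            have hfB : (f ∩ B).card = r - 1 := (hE f (hME hfM)).2.2
            have hint : 1 ≤ ((f ∩ B) ∩ BVerts B (X i)).card :=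
              Finset.card_pos.mpr ⟨v, Finset.mem_inter.mpr ⟨hvfB, hvX⟩⟩
            have hsd := Finset.card_sdiff_add_card_inter (f ∩ B) (BVerts B (X i))
            omega
        _ = (Y i).card * (r-2) := by rw [Finset.sum_const, smul_eq_mul]
        _ = (r-2) * (Y i).card := Nat.mul_comm _ _
      calc (BVerts B (X i ∪ Y i)).card
          ≤ (BVerts B (X i) ∪ (BVerts B (Y i) \ BVerts B (X i))).card :=
            Finset.card_le_card hBun
      _ ≤ (BVerts B (X i)).card + (BVerts B (Y i) \ BVerts B (X i)).card :=
            Finset.card_union_le _ _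
      _ ≤ (r-1) * (X i).card + (r-2) * (Y i).card := Nat.add_le_add (hXB i h1 h2) hY2
    -- the last Y layer is small
    have hYlast : (Y (ℓ+1)).card ≤ (r-1) * (X (ℓ+1)).card := by
      obtain ⟨hXsub, hXdisjB, hYiff, hYuniq⟩ := hLayer (ℓ+1) (by omega) (le_refl _)
      have hne : ∀ f ∈ Y (ℓ+1), (f ∩ B ∩ BVerts B (X (ℓ+1))).Nonempty := by
        intro f hf
        obtain ⟨hfM, e, heX, v, hv⟩ := (hYiff f).mp hf
        simp only [Finset.mem_inter] at hv
        exact ⟨v, Finset.mem_inter.mpr ⟨Finset.mem_inter.mpr ⟨hv.1.1, hv.2⟩,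
          Finset.mem_biUnion.mpr ⟨e, heX, Finset.mem_inter.mpr ⟨hv.1.2, hv.2⟩⟩⟩⟩
      have hYcard : (Y (ℓ+1)).card ≤ (BVerts B (X (ℓ+1))).card := by
        apply Finset.card_le_card_of_injOn (fun f => pick (f ∩ B ∩ BVerts B (X (ℓ+1))))
        · intro f hf
          exact Finset.mem_of_mem_inter_right (hpick _ (hne f hf))
        · intro f1 hf1 f2 hf2 heq
          simp only [Finset.mem_coe] at hf1 hf2
          simp only at heq
          by_contra hne2
          have hd := hMdisj f1 (hYM (ℓ+1) (by omega) (le_refl _) hf1)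
            f2 (hYM (ℓ+1) (by omega) (le_refl _) hf2) hne2
          rw [Finset.disjoint_left] at hd
          have hm1 := Finset.mem_of_mem_inter_left
            (Finset.mem_of_mem_inter_left (hpick _ (hne f1 hf1)))
          have hm2 := Finset.mem_of_mem_inter_left
            (Finset.mem_of_mem_inter_left (hpick _ (hne f2 hf2)))
          rw [heq] at hm1
          exact hd hm1 hm2
      exact le_trans hYcard (hXB (ℓ+1) (by omega) (le_refl _))
    -- assemble over all layers
    have hassemble : (BVerts B (upTo X (ℓ+1) ∪ upTo Y (ℓ+1))).card ≤
        ∑ i ∈ Finset.Icc 1 (ℓ+1), ((r-1) * (X i).card + (r-2) * (Y i).card) := by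
      have hun : upTo X (ℓ+1) ∪ upTo Y (ℓ+1) =
          (Finset.range (ℓ+2)).biUnion (fun i => X i ∪ Y i) := by
        ext e
        simp only [upTo, Finset.mem_union, Finset.mem_biUnion]
        constructor
        · rintro (⟨i, hi, he⟩ | ⟨i, hi, he⟩)
          · exact ⟨i, hi, Or.inl he⟩
          · exact ⟨i, hi, Or.inr he⟩
        · rintro ⟨i, hi, he | he⟩
          · exact Or.inl ⟨i, hi, he⟩
          · exact Or.inr ⟨i, hi, he⟩
      have hbb : BVerts B ((Finset.range (ℓ+2)).biUnion fun i => X i ∪ Y i) =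
          (Finset.range (ℓ+2)).biUnion (fun i => BVerts B (X i ∪ Y i)) :=
        Finset.biUnion_biUnion _ _ _
      rw [hun, hbb]
      calc ((Finset.range (ℓ+2)).biUnion fun i => BVerts B (X i ∪ Y i)).card
          ≤ ∑ i ∈ Finset.range (ℓ+2), (BVerts B (X i ∪ Y i)).card :=
            Finset.card_biUnion_le
      _ = (BVerts B (X 0 ∪ Y 0)).card +
          ∑ i ∈ Finset.Icc 1 (ℓ+1), (BVerts B (X i ∪ Y i)).card := icc_sum_aux _ _
      _ = ∑ i ∈ Finset.Icc 1 (ℓ+1), (BVerts B (X i ∪ Y i)).card := by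
          have h0 : BVerts B (X 0 ∪ Y 0) = ∅ := by
            rw [hX0, hY0, BVerts]
            simp only [Finset.empty_union]
            rw [Finset.singleton_biUnion]
            exact Finset.singleton_inter_of_notMem (Finset.disjoint_left.mp hAB ha0A)
          rw [h0]
          simp
      _ ≤ _ := Finset.sum_le_sum (fun i hi => by
          simp only [Finset.mem_Icc] at hi
          exact hlayerB i hi.1 hi.2)
    have hsum2 : ∑ i ∈ Finset.Icc 1 (ℓ+1), ((r-1) * (X i).card + (r-2) * (Y i).card)
        = (∑ i ∈ Finset.Icc 1 ℓ, ((r-1) * (X i).card + (r-2) * (Y i).card)) +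
          ((r-1) * (X (ℓ+1)).card + (r-2) * (Y (ℓ+1)).card) :=
      Finset.sum_Icc_succ_top (by omega) _
    -- move to the reals
    have hBVR : ((BVerts B (upTo X (ℓ+1) ∪ upTo Y (ℓ+1))).card : ℝ) ≤
        (R-1)*xs + (R-2)*y1 + ((R-1)*x' + (R-2)*((Y (ℓ+1)).card : ℝ)) := by
      have h := hassemble
      rw [hsum2] at h
      have h' : ((BVerts B (upTo X (ℓ+1) ∪ upTo Y (ℓ+1))).card : ℝ) ≤
          ((∑ i ∈ Finset.Icc 1 ℓ, ((r-1) * (X i).card + (r-2) * (Y i).card) : ℕ) : ℝ) +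
          (((r-1) * (X (ℓ+1)).card + (r-2) * (Y (ℓ+1)).card : ℕ) : ℝ) := by
        exact_mod_cast h
      have heq1 : ((∑ i ∈ Finset.Icc 1 ℓ, ((r-1) * (X i).card + (r-2) * (Y i).card) : ℕ) : ℝ)
          = (R-1)*xs + (R-2)*y1 := by
        push_cast
        simp only [hc1, hc2]
        rw [Finset.sum_add_distrib, ← Finset.mul_sum, ← Finset.mul_sum, hy1sum]
        congr 1
        rw [hxsdef]
        push_cast
        rfl
      have heq2 : (((r-1) * (X (ℓ+1)).card + (r-2) * (Y (ℓ+1)).card : ℕ) : ℝ)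
          = (R-1)*x' + (R-2)*((Y (ℓ+1)).card : ℝ) := by
        push_cast
        simp only [hc1, hc2, ← hx'def]
      rw [heq1, heq2] at h'
      exact h'
    have hYlastR : ((Y (ℓ+1)).card : ℝ) ≤ (R-1)*x' := by
      have h : ((Y (ℓ+1)).card : ℝ) ≤ (((r-1) * (X (ℓ+1)).card : ℕ) : ℝ) := by
        exact_mod_cast hYlast
      rw [Nat.cast_mul, hc1, ← hx'def] at h
      exact h
    have hWR : (W.card : ℝ) ≤ μ * xs * (R-1)^2 := by
      calc (W.card : ℝ) ≤ μ * ((upTo X ℓ).card : ℝ) * (R-1)^2 := hWcard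
      _ ≤ μ * xs * (R-1)^2 := by
          apply mul_le_mul_of_nonneg_right _ (sq_nonneg _)
          exact mul_le_mul_of_nonneg_left hupX hμ0.le
    have hCle : (C.card : ℝ) ≤
        ((BVerts B (upTo X (ℓ+1) ∪ upTo Y (ℓ+1))).card : ℝ) + (W.card : ℝ) := by
      rw [hCdef]
      exact_mod_cast Finset.card_union_le _ _
    have hlast : (R-2)*((Y (ℓ+1)).card : ℝ) ≤ (R-2)*((R-1)*x') :=
      mul_le_mul_of_nonneg_left hYlastR hRm2
    linarith only [hCle, hBVR, hWR, hlast]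
  -- final arithmetic contradiction
  have hbigR : 5 * R^2 / ε ≤ 1 + y1 := by
    calc 5 * R^2 / ε ≤ (⌈(5 * R ^ 2) / ε⌉₊ : ℝ) := Nat.le_ceil _
    _ ≤ 1 + y1 := by rw [hy1def]; exact_mod_cast hbig
  have hR2pos : (0:ℝ) < R^2 := by positivity
  have hμR : μ * R^2 = ε^2/10 := by
    rw [hμdef]
    field_simp
  have hs'1 : y1 - μ*xs - μ*(xs+x') ≤ (S'.card:ℝ) - 1 := by
    linarith only [hS'ge, hSge, hZ', hHicard]
  have h2R : (0:ℝ) ≤ 2*R-3+ε := by linarith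
  have hchain : (2*R-3+ε)*(y1 - μ*xs - μ*(xs+x')) <
      (R-1)*(xs+x') + (R-2)*(y1+(R-1)*x') + μ*xs*(R-1)^2 :=
    lt_of_le_of_lt (mul_le_mul_of_nonneg_left hs'1 h2R) (lt_of_lt_of_le hkey hcovcard)
  have hA := mul_le_mul_of_nonneg_left hxs_le hRm1
  have hstep1 : ε*y1 < (R-1)^2*x' + μ*xs*(R-1)^2 + (R-1)*(μ*xs) + (2*R-3+ε)*(μ*(2*xs+x')) := by
    linarith only [hchain, hA]
  set t : ℝ := 1 + y1 with htdef
  have ht0 : (0:ℝ) ≤ t := by linarith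
  have hεt : 20 ≤ ε * t := by
    have h := hbigR
    rw [div_le_iff₀ hε0] at h
    nlinarith only [h, hR2, hε0, hε1, hy10, htdef]
  have ht20 : (20:ℝ) ≤ t := by nlinarith only [hεt, hε1, ht0, hε0]
  have hsq : (R-1)^2 ≤ R^2 := by nlinarith only [hR2]
  have hb5 : xs ≤ (40/39) * t := by
    have h40 := mul_le_mul_of_nonneg_right hμ40 hxs0
    linarith only [hxs_le, h40, htdef, hy10]
  have hx'R : R^2 * x' ≤ ε/5 * t := by
    have h := mul_le_mul_of_nonneg_left hcon (le_of_lt hR2pos)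
    have he : R^2*(ε/(5*R^2)*t) = ε/5*t := by field_simp
    linarith only [h, he.le, he.ge]
  have hb4 : (R-1)^2*x' ≤ ε/5*t :=
    le_trans (mul_le_mul_of_nonneg_right hsq hx'0) hx'R
  have hx'20 : x' ≤ t/20 := by
    have h1 : ε/(5*R^2) ≤ 1/20 := by
      rw [div_le_div_iff₀ (by positivity) (by norm_num)]
      nlinarith only [hε1, hε0, hR2]
    calc x' ≤ ε/(5*R^2)*t := hcon
    _ ≤ 1/20*t := mul_le_mul_of_nonneg_right h1 ht0
    _ = t/20 := by ring
  have hb1 : μ*xs*(R-1)^2 ≤ ε^2/10 * xs := by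
    have h1 : μ*(R-1)^2 ≤ μ*R^2 := mul_le_mul_of_nonneg_left hsq hμ0.le
    calc μ*xs*(R-1)^2 = (μ*(R-1)^2)*xs := by ring
    _ ≤ (μ*R^2)*xs := mul_le_mul_of_nonneg_right h1 hxs0
    _ = ε^2/10*xs := by rw [hμR]
  have hb2 : (R-1)*(μ*xs) ≤ ε^2/10*xs := by
    have h1 : μ*(R-1) ≤ μ*R^2 := mul_le_mul_of_nonneg_left (by nlinarith only [hR2]) hμ0.le
    calc (R-1)*(μ*xs) = (μ*(R-1))*xs := by ring
    _ ≤ (μ*R^2)*xs := mul_le_mul_of_nonneg_right h1 hxs0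
    _ = ε^2/10*xs := by rw [hμR]
  have hb3 : (2*R-3+ε)*(μ*(2*xs+x')) ≤ ε^2/10*(2*xs+x') := by
    have h0 : (0:ℝ) ≤ 2*xs+x' := by linarith
    have h1 : μ*(2*R-3+ε) ≤ μ*R^2 := mul_le_mul_of_nonneg_left (by nlinarith only [hR2, hε1]) hμ0.le
    calc (2*R-3+ε)*(μ*(2*xs+x')) = (μ*(2*R-3+ε))*(2*xs+x') := by ring
    _ ≤ (μ*R^2)*(2*xs+x') := mul_le_mul_of_nonneg_right h1 h0
    _ = ε^2/10*(2*xs+x') := by rw [hμR]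
  have hfin : ε*y1 < ε/5*t + ε^2/10*(4*xs + x') := by
    linarith only [hstep1, hb1, hb2, hb3, hb4]
  have hsm : ε^2/10*(4*xs+x') ≤ ε^2/10*((160/39)*t + t/20) :=
    mul_le_mul_of_nonneg_left (by linarith only [hb5, hx'20]) (by positivity)
  have hee : ε^2*t ≤ ε*t := by
    nlinarith only [mul_nonneg (mul_nonneg (by linarith only [hε1] : (0:ℝ) ≤ 1-ε) hε0.le) ht0]
  have hεy1 : ε*y1 = ε*t - ε := by rw [htdef]; ring
  have heps : ε ≤ ε*(t/20) := by
    have := mul_le_mul_of_nonneg_left (by linarith : (1:ℝ) ≤ t/20) hε0.le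
    linarith only [this]
  clear_value t y1 xs x' R μ
  linarith only [hfin, hsm, hee, hεy1, heps, hεt]
end

section
/- Let H = (A, B, E) be an r-uniform bipartite hypergraph (r ≥ 2) with |A| = n, M a partial matching in H, and T = (L_0, …, L_ℓ) an alternating tree with respect to M, with layers L_i = (X_i, Y_i). Suppose γ > 0 is such that |Y_i| > γ·(1 + |Y_1 ∪ … ∪ Y_{i−1}|) for each 1 ≤ i ≤ ℓ. Then n ≥ (1 + γ)^ℓ; in particular, ℓ ≤ log n / log(1 + γ). -/
open Finset

variable {V : Type*} [DecidableEq V]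

/-- If the layers of an alternating tree satisfy the growth condition
`|Y_i| > γ·(1 + |Y_1 ∪ … ∪ Y_{i−1}|)`, then `n ≥ (1 + γ)^ℓ`; in particular
`ℓ ≤ log n / log(1 + γ)`. -/
theorem tree_depth_logarithmic {V : Type*} [DecidableEq V]
    (r : ℕ) (hr : 2 ≤ r) (A B : Finset V) (E : Finset (Finset V))
    (hH : IsBipHypergraph r A B E)
    (M : Finset (Finset V)) (hM : IsPartialMatching E M)
    (a0 : V) (ℓ : ℕ) (X Y : ℕ → Finset (Finset V))
    (hT : IsAltTree A B E M a0 ℓ X Y)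
    (γ : ℝ) (hγ : 0 < γ)
    (hgrow : ∀ i, 1 ≤ i → i ≤ ℓ →
      γ * (1 + (unionIcc Y 1 (i - 1)).card : ℝ) < ((Y i).card : ℝ)) :
    (1 + γ) ^ ℓ ≤ (A.card : ℝ) ∧
    (ℓ : ℝ) ≤ Real.log (A.card : ℝ) / Real.log (1 + γ) := by
  classical
  obtain ⟨hdisj, hE⟩ := hH
  obtain ⟨ha0A, ha0M, hX0, hY0, hlayer, hAsub, hBdisj⟩ := hT
  have hYM : ∀ i, 1 ≤ i → i ≤ ℓ → Y i ⊆ M := by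
    intro i h1 h2 e he
    exact (((hlayer i h1 h2).2.2.1 e).mp he).1
  have hMB : ∀ e ∈ M, (e ∩ B).Nonempty := by
    intro e he
    have h := (hE e (hM.1 he)).2.2
    rw [← Finset.card_pos, h]; omega
  have hYdisj : ∀ i j, i ≤ ℓ → j ≤ ℓ → 1 ≤ i → 1 ≤ j → i ≠ j →
      Disjoint (Y i) (Y j) := by
    intro i j hi hj h1i h1j hij
    rw [Finset.disjoint_left]
    intro e hei hej
    obtain ⟨b, hb⟩ := hMB e (hYM i h1i hi hei)
    rw [Finset.mem_inter] at hb
    have hbi : b ∈ BVerts B (X i ∪ Y i) := by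
      simp only [BVerts, Finset.mem_biUnion, Finset.mem_union, Finset.mem_inter]
      exact ⟨e, Or.inr hei, hb.1, hb.2⟩
    have hbj : b ∈ BVerts B (X j ∪ Y j) := by
      simp only [BVerts, Finset.mem_biUnion, Finset.mem_union, Finset.mem_inter]
      exact ⟨e, Or.inr hej, hb.1, hb.2⟩
    exact Finset.disjoint_left.mp (hBdisj i j hi hj hij) hbi hbj
  -- cardinality recursion
  have hcard : ∀ i, 1 ≤ i → i ≤ ℓ →
      (unionIcc Y 1 i).card = (unionIcc Y 1 (i - 1)).card + (Y i).card := by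
    intro i h1 h2
    have hsplit : unionIcc Y 1 i = unionIcc Y 1 (i - 1) ∪ Y i := by
      unfold unionIcc
      have : Finset.Icc 1 i = insert i (Finset.Icc 1 (i - 1)) := by
        ext k; simp [Finset.mem_Icc, Finset.mem_insert]; omega
      rw [this, Finset.biUnion_insert, Finset.union_comm]
    have hdis : Disjoint (unionIcc Y 1 (i - 1)) (Y i) := by
      unfold unionIcc
      rw [Finset.disjoint_left]
      intro e he hei
      simp only [Finset.mem_biUnion, Finset.mem_Icc] at he
      obtain ⟨j, ⟨hj1, hj2⟩, hej⟩ := he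
      exact Finset.disjoint_left.mp
        (hYdisj j i (by omega) h2 hj1 h1 (by omega)) hej hei
    rw [hsplit, Finset.card_union_of_disjoint hdis]
  -- growth: (1+γ)^i ≤ 1 + |unionIcc Y 1 i|
  have hpow : ∀ i, i ≤ ℓ → (1 + γ) ^ i ≤ 1 + ((unionIcc Y 1 i).card : ℝ) := by
    intro i
    induction i with
    | zero =>
      intro _
      have : unionIcc Y 1 0 = ∅ := by simp [unionIcc]
      simp [this]
    | succ k ih =>
      intro hk
      have hk' : k ≤ ℓ := by omega
      have hrec := hcard (k + 1) (by omega) hk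
      have hg := hgrow (k + 1) (by omega) hk
      simp only [Nat.add_sub_cancel] at hrec hg
      have hih := ih hk'
      have h1γ : (0 : ℝ) < 1 + γ := by linarith
      calc (1 + γ) ^ (k + 1) = (1 + γ) ^ k * (1 + γ) := by ring
        _ ≤ (1 + ((unionIcc Y 1 k).card : ℝ)) * (1 + γ) := by
            apply mul_le_mul_of_nonneg_right hih (le_of_lt h1γ)
        _ = (1 + ((unionIcc Y 1 k).card : ℝ)) + γ * (1 + ((unionIcc Y 1 k).card : ℝ)) := by
            ring
        _ ≤ (1 + ((unionIcc Y 1 k).card : ℝ)) + ((Y (k + 1)).card : ℝ) := by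
            linarith
        _ = 1 + ((unionIcc Y 1 (k + 1)).card : ℝ) := by
            rw [hrec]; push_cast; ring
  -- 1 + |unionIcc Y 1 ℓ| ≤ |A|
  have hSA : (unionIcc Y 1 ℓ).card + 1 ≤ A.card := by
    set S := unionIcc Y 1 ℓ with hS
    have hSM : S ⊆ M := by
      intro e he
      simp only [hS, unionIcc, Finset.mem_biUnion, Finset.mem_Icc] at he
      obtain ⟨j, ⟨hj1, hj2⟩, hej⟩ := he
      exact hYM j hj1 hj2 hej
    have ha0S : ({a0} : Finset V) ∉ S := fun h => ha0M _ (hSM h) (Finset.mem_singleton_self a0)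
    set T := insert ({a0} : Finset V) S with hTdef
    have hTcard : T.card = S.card + 1 := Finset.card_insert_of_notMem ha0S
    -- each e ∈ T has nonempty e ∩ A
    have hne : ∀ e ∈ T, (e ∩ A).Nonempty := by
      intro e he
      rcases Finset.mem_insert.mp he with h | h
      · subst h; exact ⟨a0, by simp [ha0A]⟩
      · have := (hE e (hM.1 (hSM h))).2.1
        rw [← Finset.card_pos, this]; omega
    set f : Finset V → V := fun e => if h : (e ∩ A).Nonempty then h.choose else a0 with hf
    have hfe : ∀ e ∈ T, f e ∈ e ∩ A := by
      intro e he
      simp only [hf, dif_pos (hne e he)]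
      exact (hne e he).choose_spec
    have : T.card ≤ A.card := by
      apply Finset.card_le_card_of_injOn f
      · intro e he
        exact (Finset.mem_inter.mp (hfe e he)).2
      · intro e he e' he' hfeq
        by_contra hne'
        have h1 := Finset.mem_inter.mp (hfe e he)
        have h2 := Finset.mem_inter.mp (hfe e' he')
        rw [hfeq] at h1
        rcases Finset.mem_insert.mp he with h | h
        · rcases Finset.mem_insert.mp he' with h' | h'
          · exact hne' (h.trans h'.symm)
          · -- e = {a0}, e' ∈ S ⊆ M; f e' = f e ∈ {a0} so a0 ∈ e'
            subst h
            have : f e' = a0 := Finset.mem_singleton.mp h1.1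
            exact ha0M e' (hSM h') (this ▸ h2.1)
        · rcases Finset.mem_insert.mp he' with h' | h'
          · subst h'
            have : f {a0} = a0 := Finset.mem_singleton.mp h2.1
            exact ha0M e (hSM h) (this ▸ h1.1)
          · exact Finset.disjoint_left.mp
              (hM.2 e' (hSM h') e (hSM h) (fun hh => hne' hh.symm)) h2.1 h1.1
    omega
  have hmain : (1 + γ) ^ ℓ ≤ (A.card : ℝ) := by
    have h1 := hpow ℓ le_rfl
    have h2 : ((unionIcc Y 1 ℓ).card : ℝ) + 1 ≤ (A.card : ℝ) := by
      exact_mod_cast hSA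
    linarith
  refine ⟨hmain, ?_⟩
  have hlog : 0 < Real.log (1 + γ) := Real.log_pos (by linarith)
  rw [le_div_iff₀ hlog]
  have h1 : Real.log ((1 + γ) ^ ℓ) ≤ Real.log (A.card : ℝ) := by
    apply Real.log_le_log (by positivity) hmain
  rwa [Real.log_pow] at h1
end
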